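/- arXiv:2312.05138 — 9 statements merged into one kernel-verified Lean document; each statement's English description precedes it below -/
import Mathlib

section
/- For every real X ≥ 1, ∫_1^X ⌊X/t⌋ · M(t)/t dt = log X, where M(t) = ∑_{n ≤ t} μ(n). -/
/-!
Writing `⌊X/t⌋ = ∑_{k ≤ X/t} 1` and `M(t) = ∑_{n ≤ t} μ(n)`, the integrand is
`∑_{n,k} μ(n) 1_{[n, X/k]}(t) / t`, so the integral equals
`∑_{nk ≤ X} μ(n) log (X/(nk)) = ∑_{m ≤ X} (μ * ζ)(m) log (X/m)`,
and `μ * ζ = ε` leaves `log X`.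
The same computation gives `∫_1^X F(t) G(X/t) dt/t = ∑_{m ≤ X} (f * g)(m) log (X/m)`
for the summatory functions `F`, `G` of any `f`, `g`.
-/

open Finset MeasureTheory
open scoped ArithmeticFunction.zeta ArithmeticFunction.Moebius

theorem intervalIntegral.integral_indicator_Icc {E : Type*} [NormedAddCommGroup E]
    [NormedSpace ℝ E] {f : ℝ → E} {a b c d : ℝ} (hac : a ≤ c) (hcd : c ≤ d) (hdb : d ≤ b) :
    ∫ x in a..b, (Set.Icc c d).indicator f x = ∫ x in c..d, f x := by
  have hIoc : (Set.Icc c d).indicator f =ᵐ[volume] (Set.Ioc c d).indicator f :=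
    indicator_ae_eq_of_ae_eq_set Ioc_ae_eq_Icc.symm
  rw [intervalIntegral.integral_of_le (hac.trans (hcd.trans hdb)),
    intervalIntegral.integral_of_le hcd, MeasureTheory.integral_congr_ae (ae_restrict_of_ae hIoc),
    MeasureTheory.integral_indicator measurableSet_Ioc, Measure.restrict_restrict measurableSet_Ioc,
    Set.inter_eq_left.mpr (Set.Ioc_subset_Ioc hac hdb)]

theorem integral_indicator_Icc_inv {a b c d : ℝ} (ha : 0 < a) (hac : a ≤ c) (hdb : d ≤ b) :
    ∫ x in a..b, (Set.Icc c d).indicator (·⁻¹) x = if c ≤ d then Real.log (d / c) else 0 := by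
  split_ifs with hcd
  · rw [intervalIntegral.integral_indicator_Icc hac hcd hdb,
      integral_inv_of_pos (ha.trans_le hac) (ha.trans_le (hac.trans hcd))]
  · simp [Set.Icc_eq_empty hcd]

namespace ArithmeticFunction

theorem sum_Ioc_mul_mul_eq_sum_prod_filter {R : Type*} [Semiring R]
    (f g : ArithmeticFunction R) (w : ℕ → R) (N : ℕ) :
    ∑ n ∈ Ioc 0 N, (f * g) n * w n =
      ∑ x ∈ Ioc 0 N ×ˢ Ioc 0 N with x.1 * x.2 ≤ N, f x.1 * g x.2 * w (x.1 * x.2) := by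
  have hmaps : ∀ x ∈ {x ∈ Ioc 0 N ×ˢ Ioc 0 N | x.1 * x.2 ≤ N}, x.1 * x.2 ∈ Ioc 0 N := by
    intro x hx
    simp only [mem_filter, mem_product, mem_Ioc] at hx
    exact mem_Ioc.mpr ⟨Nat.mul_pos hx.1.1.1 hx.1.2.1, hx.2⟩
  rw [← sum_fiberwise_of_maps_to hmaps]
  refine sum_congr rfl fun n hn => ?_
  rw [mem_Ioc] at hn
  rw [mul_apply, sum_mul, filter_filter,
    Nat.divisorsAntidiagonal_eq_prod_filter_of_le hn.1.ne' hn.2]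
  refine sum_congr (filter_congr fun x _ => ?_) fun x hx => ?_
  · exact ⟨fun h => ⟨h ▸ hn.2, h⟩, And.right⟩
  · rw [(mem_filter.mp hx).2.2]

/-- For `f = μ` this is the Mertens function `M`. -/
noncomputable def summatory {R : Type*} [AddCommMonoid R] (f : ℕ → R) (y : ℝ) : R :=
  ∑ n ∈ Ioc 0 ⌊y⌋₊, f n

theorem summatory_zeta {R : Type*} [Semiring R] (y : ℝ) :
    summatory (ζ : ArithmeticFunction R) y = ⌊y⌋₊ := by
  simp only [summatory, natCoe_apply, ← Nat.cast_sum, sum_Ioc_zeta]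

theorem summatory_eq_sum_ite {R : Type*} [AddCommMonoid R] (f : ℕ → R) {y : ℝ} (hy : 0 ≤ y)
    {N : ℕ} (hN : ⌊y⌋₊ ≤ N) :
    summatory f y = ∑ n ∈ Ioc 0 N, if (n : ℝ) ≤ y then f n else 0 := by
  rw [summatory, ← sum_filter]
  congr 1
  ext n
  simp only [mem_Ioc, mem_filter, ← Nat.le_floor_iff hy]
  omega

theorem summatory_mul_summatory_div_eq_sum_indicator (f g : ℕ → ℝ) {X t : ℝ}
    (ht : t ∈ Set.Icc 1 X) :
    summatory f t * summatory g (X / t) / t =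
      ∑ x ∈ Ioc 0 ⌊X⌋₊ ×ˢ Ioc 0 ⌊X⌋₊,
        f x.1 * g x.2 * (Set.Icc (x.1 : ℝ) (X / x.2)).indicator (·⁻¹) t := by
  obtain ⟨h1t, htX⟩ := ht
  have ht0 : 0 < t := one_pos.trans_le h1t
  rw [summatory_eq_sum_ite f ht0.le (Nat.floor_le_floor htX),
    summatory_eq_sum_ite g (div_nonneg (ht0.le.trans htX) ht0.le)
      (Nat.floor_le_floor (div_le_self (by linarith) h1t)),
    sum_mul_sum, sum_div, sum_product]
  refine sum_congr rfl fun n _ => ?_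
  rw [sum_div]
  refine sum_congr rfl fun k hk => ?_
  have hk0 : (0 : ℝ) < k := by exact_mod_cast (mem_Ioc.mp hk).1
  have hkt : (k : ℝ) ≤ X / t ↔ t ≤ X / k := by
    rw [le_div_iff₀ ht0, le_div_iff₀ hk0, mul_comm]
  simp only [Set.indicator_apply, Set.mem_Icc, hkt]
  rw [ite_zero_mul_ite_zero, ite_div, zero_div, mul_ite, mul_zero]
  simp only [div_eq_mul_inv]

theorem integral_summatory_mul_summatory_div (f g : ArithmeticFunction ℝ) {X : ℝ}
    (hX : 1 ≤ X) :
    ∫ t in (1 : ℝ)..X, summatory f t * summatory g (X / t) / t =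
      ∑ m ∈ Ioc 0 ⌊X⌋₊, (f * g) m * Real.log (X / m) := by
  have hinv : IntervalIntegrable (·⁻¹) volume (1 : ℝ) X :=
    intervalIntegrable_inv_iff.mpr (Or.inr fun h0 => by
      rw [Set.uIcc_of_le hX] at h0; linarith [h0.1])
  have hint (x : ℕ × ℕ) :
      IntervalIntegrable ((Set.Icc (x.1 : ℝ) (X / x.2)).indicator (·⁻¹)) volume 1 X :=
    ⟨hinv.1.indicator measurableSet_Icc, hinv.2.indicator measurableSet_Icc⟩
  rw [intervalIntegral.integral_congr fun t ht =>
      summatory_mul_summatory_div_eq_sum_indicator f g (Set.uIcc_of_le hX ▸ ht),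
    intervalIntegral.integral_finsetSum fun x _ => (hint x).const_mul _,
    sum_Ioc_mul_mul_eq_sum_prod_filter, sum_filter]
  refine sum_congr rfl fun x hx => ?_
  simp only [mem_product, mem_Ioc] at hx
  have hn : (1 : ℝ) ≤ x.1 := by exact_mod_cast hx.1.1
  have hk : (1 : ℝ) ≤ x.2 := by exact_mod_cast hx.2.1
  rw [intervalIntegral.integral_const_mul,
    integral_indicator_Icc_inv one_pos hn (div_le_self (by linarith) hk)]
  have hle : (x.1 : ℝ) ≤ X / x.2 ↔ x.1 * x.2 ≤ ⌊X⌋₊ := by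
    rw [le_div_iff₀ (by linarith), Nat.le_floor_iff (by linarith)]
    push_cast; rfl
  simp only [hle, div_div, mul_comm (x.2 : ℝ), Nat.cast_mul]
  split_ifs <;> simp

end ArithmeticFunction

open ArithmeticFunction

theorem integral_floor_mertens (X : ℝ) (hX : 1 ≤ X) :
    ∫ t in (1:ℝ)..X,
        (⌊X / t⌋ : ℝ) * (∑ n ∈ Finset.Icc 1 ⌊t⌋₊, (ArithmeticFunction.moebius n : ℝ)) / t
      = Real.log X := by
  have hintegrand : ∀ t ∈ Set.uIcc 1 X,
      (⌊X / t⌋ : ℝ) * (∑ n ∈ Finset.Icc 1 ⌊t⌋₊, (μ n : ℝ)) / t =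
        summatory (μ : ArithmeticFunction ℝ) t *
          summatory (ζ : ArithmeticFunction ℝ) (X / t) / t := by
    intro t ht
    rw [Set.uIcc_of_le hX] at ht
    have hXt : 0 ≤ X / t := div_nonneg (by linarith) (by linarith [ht.1])
    rw [summatory_zeta, natCast_floor_eq_intCast_floor hXt, summatory,
      ← Finset.Icc_add_one_left_eq_Ioc]
    simp only [intCoe_apply, zero_add, mul_comm]
  have h1 : 1 ∈ Ioc 0 ⌊X⌋₊ := by simpa using (Nat.one_le_floor_iff X).mpr hX
  rw [intervalIntegral.integral_congr hintegrand, integral_summatory_mul_summatory_div _ _ hX,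
    coe_moebius_mul_coe_zeta, sum_eq_single_of_mem 1 h1 fun m _ hm => by simp [one_apply, hm]]
  simp
end

section
/- For every real X ≥ 1, MacLeod's identity holds: ∑_{n ≤ X} μ(n)·({X/n}² − {X/n})/(X/n) = X·m(X) − M(X) − 2 + 2/X, where m(X) = ∑_{n ≤ X} μ(n)/n and M(X) = ∑_{n ≤ X} μ(n). -/
/-!
Put `N = ⌊X⌋` and `t = X / n`, so that `⌊t⌋ = ⌊N / n⌋`. Since `{t} = t - ⌊t⌋`,
`({t}² - {t}) / t = t - 2⌊t⌋ - 1 + ⌊t⌋(⌊t⌋ + 1) / t`, and summing against `μ(n)` turns the left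
side into `X m(X) - 2 ∑ μ(n) ⌊N/n⌋ - M(X) + X⁻¹ ∑ μ(n) n ⌊N/n⌋(⌊N/n⌋ + 1)`. For a completely
multiplicative `f`, `∑_{n ≤ N} μ(n) f(n) ∑_{m ≤ N/n} f(m) = ∑_{q ≤ N} f(q) ∑_{d ∣ q} μ(d) = 1`;
with `f = ζ` and, via `K(K + 1) = 2 ∑_{m ≤ K} m`, with `f = id` the two sums are `1` and `2`.
-/

open Finset ArithmeticFunction

theorem Int.fract_sq_sub_fract_div {α : Type*} [Field α] [LinearOrder α] [IsStrictOrderedRing α]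
    [FloorRing α] {t : α} (ht : t ≠ 0) :
    (Int.fract t ^ 2 - Int.fract t) / t = t - 2 * ⌊t⌋ - 1 + ⌊t⌋ * (⌊t⌋ + 1) / t := by
  rw [Int.fract]
  field_simp
  ring

theorem Finset.sum_Ioc_id_mul_two {R : Type*} [CommSemiring R] (K : ℕ) :
    (∑ m ∈ Ioc 0 K, (m : R)) * 2 = K * (K + 1) := by
  induction K with
  | zero => simp
  | succ k ih =>
    rw [sum_Ioc_succ_top k.zero_le, add_mul, ih]
    push_cast
    ring

namespace ArithmeticFunction

theorem sum_Ioc_one_apply {R : Type*} [AddCommMonoid R] [One R] {N : ℕ} (hN : N ≠ 0) :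
    ∑ n ∈ Ioc 0 N, (1 : ArithmeticFunction R) n = 1 := by
  simp [one_apply, Nat.one_le_iff_ne_zero.2 hN]

section CompletelyMultiplicative

variable {R : Type*} [CommRing R] {f : ArithmeticFunction R}

theorem pmul_moebius_mul_eq_one (hf_one : f 1 = 1) (hf_mul : ∀ m n, f (m * n) = f m * f n) :
    (moebius : ArithmeticFunction R).pmul f * f = 1 := by
  ext q
  have hq : (1 : ArithmeticFunction R) q = f q * ((moebius : ArithmeticFunction R) * zeta) q := by
    rw [coe_moebius_mul_coe_zeta, one_apply]
    split_ifs with h1 <;> simp [h1, hf_one]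
  rw [hq, mul_apply, mul_apply, mul_sum]
  refine sum_congr rfl fun p hp => ?_
  obtain ⟨rfl, hp0⟩ := Nat.mem_divisorsAntidiagonal.1 hp
  simp [pmul_apply, right_ne_zero_of_mul hp0, hf_mul]
  ring

theorem sum_Ioc_moebius_mul_sum_Ioc_div (hf_one : f 1 = 1)
    (hf_mul : ∀ m n, f (m * n) = f m * f n) {N : ℕ} (hN : N ≠ 0) :
    ∑ n ∈ Ioc 0 N, moebius n * f n * ∑ m ∈ Ioc 0 (N / n), f m = 1 := by
  have h := sum_Ioc_mul_eq_sum_sum ((moebius : ArithmeticFunction R).pmul f) f N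
  rw [pmul_moebius_mul_eq_one hf_one hf_mul, sum_Ioc_one_apply hN] at h
  simpa [pmul_apply] using h.symm

end CompletelyMultiplicative

theorem sum_Ioc_moebius_mul_div {N : ℕ} (hN : N ≠ 0) :
    ∑ n ∈ Ioc 0 N, (moebius n : ℝ) * (N / n : ℕ) = 1 := by
  have h := sum_Ioc_mul_zeta_eq_sum (moebius : ArithmeticFunction ℝ) N
  rw [coe_moebius_mul_coe_zeta, sum_Ioc_one_apply hN] at h
  simpa using h.symm

theorem sum_Ioc_moebius_mul_mul_div_mul_div_add_one {N : ℕ} (hN : N ≠ 0) :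
    ∑ n ∈ Ioc 0 N, (moebius n : ℝ) * n * ((N / n : ℕ) * ((N / n : ℕ) + 1)) = 2 := by
  have h := sum_Ioc_moebius_mul_sum_Ioc_div
    (f := ((ArithmeticFunction.id : ArithmeticFunction ℕ) : ArithmeticFunction ℝ))
    (by simp) (by simp) hN
  simp only [natCoe_apply, id_apply] at h
  calc ∑ n ∈ Ioc 0 N, (moebius n : ℝ) * n * ((N / n : ℕ) * ((N / n : ℕ) + 1))
      = (∑ n ∈ Ioc 0 N, (moebius n : ℝ) * n * ∑ m ∈ Ioc 0 (N / n), (m : ℝ)) * 2 := by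
        simp_rw [sum_mul, mul_assoc, sum_Ioc_id_mul_two]
    _ = 2 := by rw [h, one_mul]

end ArithmeticFunction

theorem macleod_identity (X : ℝ) (hX : 1 ≤ X) :
    ∑ n ∈ Finset.Icc 1 ⌊X⌋₊, (ArithmeticFunction.moebius n : ℝ) *
        ((Int.fract (X / n)) ^ 2 - Int.fract (X / n)) / (X / n)
      = X * (∑ n ∈ Finset.Icc 1 ⌊X⌋₊, (ArithmeticFunction.moebius n : ℝ) / n)
        - (∑ n ∈ Finset.Icc 1 ⌊X⌋₊, (ArithmeticFunction.moebius n : ℝ)) - 2 + 2 / X := by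
  set N := ⌊X⌋₊
  have hN : N ≠ 0 := (Nat.floor_pos.2 hX).ne'
  have hterm : ∀ n ∈ Ioc 0 N, (moebius n : ℝ) *
      (Int.fract (X / n) ^ 2 - Int.fract (X / n)) / (X / n)
      = X * ((moebius n : ℝ) / n) - 2 * ((moebius n : ℝ) * (N / n : ℕ)) - moebius n
        + (moebius n : ℝ) * n * ((N / n : ℕ) * ((N / n : ℕ) + 1)) / X := by
    intro n hn
    have hn0 : (0 : ℝ) < n := by exact_mod_cast (mem_Ioc.1 hn).1
    have hfloor : ((⌊X / n⌋ : ℤ) : ℝ) = (N / n : ℕ) := by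
      rw [← natCast_floor_eq_intCast_floor (by positivity), Nat.floor_div_natCast]
    rw [mul_div_assoc, Int.fract_sq_sub_fract_div (by positivity), hfloor]
    field_simp
  rw [show Icc 1 N = Ioc 0 N from Icc_add_one_left_eq_Ioc 0 N, sum_congr rfl hterm,
    sum_add_distrib, sum_sub_distrib, sum_sub_distrib, ← mul_sum, ← mul_sum, ← sum_div,
    sum_Ioc_moebius_mul_div hN, sum_Ioc_moebius_mul_mul_div_mul_div_add_one hN]
  ring
end

section
/- Let f, g be arithmetic functions, let h : (0,1] → ℂ be Lebesgue-integrable on every compact subinterval of (0,1], and let H : [1,∞) → ℂ be absolutely continuous on every finite interval. Set S_f(t) = ∑_{n ≤ t} f(n) and S_{f⋆g}(t) = ∑_{n ≤ t} (f⋆g)(n) where f⋆g is Dirichlet convolution. Then for X ≥ 1: ∑_{n ≤ X} f(n)·H(X/n) − H(1)·S_f(X) = ∫_1^X S_{f⋆g}(X/t)·h(1/t)·dt/t + ∫_1^X S_f(X/t)·(H'(t) − (1/t)·∑_{n ≤ t} g(n)·h(n/t)) dt. -/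
open Finset MeasureTheory

/-!
Both step functions in the integrands expand as finite sums of indicators:
`S_f(X/t) = ∑_{n ≤ X} f(n) 1[t ≤ X/n]` and `∑_{n ≤ t} g(n) h(n/t) = ∑_{n ≤ Y} g(n) h(n/t) 1[n ≤ t]`
for `t ≤ Y`. Integrating term by term, the `H'` part telescopes to `∑_{n ≤ X} f(n) (H(X/n) - H(1))`,
the left-hand side. With `G(Y) = ∫_1^Y h(1/u) du/u`, the substitution `t = n u` gives
`∫_n^Y h(n/t) dt/t = G(Y/n)`, so both `h` parts equal `∑_{de ≤ X} f(d) g(e) G(X/(de))` and cancel.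
-/

theorem sum_Icc_eq_sum_Icc_ite {M : Type*} [AddCommMonoid M] (v : ℕ → M) {m n : ℕ}
    (h : m ≤ n) : ∑ k ∈ Icc 1 m, v k = ∑ k ∈ Icc 1 n, if k ≤ m then v k else 0 := by
  rw [← sum_filter]
  congr 1
  ext k
  simp only [mem_filter, mem_Icc]
  omega

theorem natCast_mem_Icc_of_mem_Icc_floor {X : ℝ} {n : ℕ} (hn : n ∈ Icc 1 ⌊X⌋₊) :
    (n : ℝ) ∈ Set.Icc 1 X :=
  ⟨Nat.one_le_cast.2 (mem_Icc.1 hn).1,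
    (Nat.le_floor_iff' (Nat.one_le_iff_ne_zero.1 (mem_Icc.1 hn).1)).1 (mem_Icc.1 hn).2⟩

theorem sum_Icc_mul_div_eq_sum_filter_dvd {M : Type*} [AddCommMonoid M] (v : ℕ → M) {d : ℕ}
    (hd : 0 < d) (N : ℕ) :
    ∑ e ∈ Icc 1 (N / d), v (d * e) = ∑ m ∈ Icc 1 N with d ∣ m, v m := by
  refine sum_nbij' (d * ·) (· / d) ?_ ?_ ?_ ?_ (fun _ _ => rfl)
  · intro e he
    simp only [mem_filter, mem_Icc] at he ⊢
    refine ⟨⟨by nlinarith, ?_⟩, dvd_mul_right d e⟩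
    rw [mul_comm]
    exact (Nat.le_div_iff_mul_le hd).1 he.2
  · intro m hm
    simp only [mem_filter, mem_Icc] at hm ⊢
    obtain ⟨⟨hm1, hmN⟩, k, rfl⟩ := hm
    rw [Nat.mul_div_cancel_left k hd]
    exact ⟨Nat.pos_of_mul_pos_left hm1, (Nat.le_div_iff_mul_le hd).2 (by linarith [mul_comm d k])⟩
  · intro e _
    simp [Nat.mul_div_cancel_left e hd]
  · intro m hm
    rw [mem_filter] at hm
    exact Nat.mul_div_cancel' hm.2

theorem sum_mul_sum_Icc_div_eq_sum_divisors {R : Type*} [CommSemiring R] (f g ψ : ℕ → R)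
    (N : ℕ) :
    ∑ d ∈ Icc 1 N, f d * ∑ e ∈ Icc 1 (N / d), g e * ψ (d * e)
      = ∑ m ∈ Icc 1 N, (∑ d ∈ m.divisors, f d * g (m / d)) * ψ m := by
  calc ∑ d ∈ Icc 1 N, f d * ∑ e ∈ Icc 1 (N / d), g e * ψ (d * e)
      = ∑ d ∈ Icc 1 N, ∑ m ∈ Icc 1 N with d ∣ m, f d * g (m / d) * ψ m := by
        refine sum_congr rfl fun d hd => ?_
        have hd : 0 < d := (mem_Icc.1 hd).1
        rw [mul_sum, ← sum_Icc_mul_div_eq_sum_filter_dvd _ hd]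
        simp only [Nat.mul_div_cancel_left _ hd, mul_assoc]
    _ = ∑ m ∈ Icc 1 N, (∑ d ∈ m.divisors, f d * g (m / d)) * ψ m := by
        simp only [sum_mul]
        refine sum_comm' fun d m => ?_
        simp only [mem_Icc, mem_filter, Nat.mem_divisors]
        constructor
        · rintro ⟨-, hm, hdm⟩
          exact ⟨⟨hdm, by omega⟩, hm⟩
        · rintro ⟨⟨hdm, -⟩, hm⟩
          exact ⟨⟨Nat.pos_of_dvd_of_pos hdm hm.1, (Nat.le_of_dvd hm.1 hdm).trans hm.2⟩, hm, hdm⟩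

theorem sum_Icc_floor_div_mul_eqOn {R : Type*} [Semiring R] (a : ℕ → R) (F : ℝ → R) {X : ℝ}
    (hX : 0 ≤ X) :
    Set.EqOn (fun t => (∑ n ∈ Icc 1 ⌊X / t⌋₊, a n) * F t)
      (fun t => ∑ n ∈ Icc 1 ⌊X⌋₊, (Set.Iic (X / n)).indicator (fun x => a n * F x) t)
      (Set.Ici 1) := by
  intro t (ht : 1 ≤ t)
  have ht0 : 0 < t := one_pos.trans_le ht
  dsimp only
  rw [sum_Icc_eq_sum_Icc_ite _ (Nat.floor_mono (div_le_self hX ht)), sum_mul]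
  refine sum_congr rfl fun n hn => ?_
  have hn1 : n ≠ 0 := Nat.one_le_iff_ne_zero.1 (mem_Icc.1 hn).1
  have hn0 : (0 : ℝ) < n := by positivity
  rw [ite_mul, zero_mul, Set.indicator_apply]
  refine if_congr ?_ rfl rfl
  rw [Nat.le_floor_iff' hn1, le_div_iff₀ ht0, ← le_div_iff₀' hn0]
  rfl

theorem sum_Icc_floor_eqOn {M : Type*} [AddCommMonoid M] (φ : ℕ → ℝ → M) (Y : ℝ) :
    Set.EqOn (fun t => ∑ n ∈ Icc 1 ⌊t⌋₊, φ n t)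
      (fun t => ∑ n ∈ Icc 1 ⌊Y⌋₊, (Set.Ici (n : ℝ)).indicator (φ n) t) (Set.Iic Y) := by
  intro t (ht : t ≤ Y)
  dsimp only
  rw [sum_Icc_eq_sum_Icc_ite _ (Nat.floor_mono ht)]
  refine sum_congr rfl fun n hn => ?_
  have hn1 : n ≠ 0 := Nat.one_le_iff_ne_zero.1 (mem_Icc.1 hn).1
  rw [Set.indicator_apply]
  exact if_congr (Nat.le_floor_iff' hn1) rfl rfl

theorem intervalIntegral.integral_indicator_Ici {E : Type*} [NormedAddCommGroup E]
    [NormedSpace ℝ E] {f : ℝ → E} {a b c : ℝ} (h : b ∈ Set.Icc a c) :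
    ∫ x in a..c, (Set.Ici b).indicator f x = ∫ x in b..c, f x := by
  have hae : (Set.Ici b).indicator f =ᵐ[volume] (Set.Ioi b).indicator f :=
    indicator_ae_eq_of_ae_eq_set Ioi_ae_eq_Ici.symm
  rw [intervalIntegral.integral_congr_ae (hae.mono fun x hx _ => hx),
    intervalIntegral.integral_of_le (h.1.trans h.2), intervalIntegral.integral_of_le h.2,
    setIntegral_indicator measurableSet_Ioi, Set.Ioc_inter_Ioi, max_eq_right h.1]

theorem IntervalIntegrable.indicator {E : Type*} [NormedAddCommGroup E] {f : ℝ → E} {a b : ℝ}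
    (hf : IntervalIntegrable f volume a b) {s : Set ℝ} (hs : MeasurableSet s) :
    IntervalIntegrable (s.indicator f) volume a b :=
  intervalIntegrable_iff.2 ((intervalIntegrable_iff.1 hf).indicator hs)

theorem intervalIntegrable_indicator_Ici {E : Type*} [NormedAddCommGroup E] {f : ℝ → E}
    {a b c : ℝ} (hac : a ≤ c) (hf : IntegrableOn f (Set.Icc b c)) :
    IntervalIntegrable ((Set.Ici b).indicator f) volume a c := by
  refine (intervalIntegrable_iff_integrableOn_Icc_of_le hac).2
    ((hf.indicator measurableSet_Ici).of_forall_sdiff_eq_zero measurableSet_Icc fun x hx => ?_)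
  have hxb : x < b := by
    by_contra! hbx
    exact hx.2 ⟨hbx, hx.1.2⟩
  exact Set.indicator_of_notMem (not_le.2 hxb) f

section FloorDiv

variable {𝕜 : Type*} [RCLike 𝕜] (a : ℕ → 𝕜) {F : ℝ → 𝕜} {X : ℝ}

theorem intervalIntegrable_sum_Icc_floor_div_mul (hX : 1 ≤ X)
    (hF : IntervalIntegrable F volume 1 X) :
    IntervalIntegrable (fun t => (∑ n ∈ Icc 1 ⌊X / t⌋₊, a n) * F t) volume 1 X := by
  refine (intervalIntegrable_congr ((sum_Icc_floor_div_mul_eqOn a F (by linarith)).mono ?_)).2 ?_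
  · rw [Set.uIoc_of_le hX]
    exact Set.Ioc_subset_Icc_self.trans Set.Icc_subset_Ici_self
  · simpa only [sum_fn] using IntervalIntegrable.sum (Icc 1 ⌊X⌋₊) fun n _ =>
      (hF.const_mul (a n)).indicator measurableSet_Iic

theorem integral_sum_Icc_floor_div_mul (hX : 1 ≤ X) (hF : IntervalIntegrable F volume 1 X) :
    ∫ t in 1..X, (∑ n ∈ Icc 1 ⌊X / t⌋₊, a n) * F t
      = ∑ n ∈ Icc 1 ⌊X⌋₊, a n * ∫ t in 1..X / n, F t := by
  rw [intervalIntegral.integral_congr ((sum_Icc_floor_div_mul_eqOn a F (by linarith)).mono ?_),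
    intervalIntegral.integral_finsetSum
      fun n _ => (hF.const_mul (a n)).indicator measurableSet_Iic]
  · refine sum_congr rfl fun n hn => ?_
    have hn := natCast_mem_Icc_of_mem_Icc_floor hn
    rw [← intervalIntegral.integral_const_mul]
    exact intervalIntegral.integral_indicator
      ⟨(one_le_div₀ (by linarith [hn.1])).2 hn.2, div_le_self (by linarith) hn.1⟩
  · rw [Set.uIcc_of_le hX]
    exact Set.Icc_subset_Ici_self

end FloorDiv

section Floor

variable {E : Type*} [NormedAddCommGroup E] {φ : ℕ → ℝ → E} {Y : ℝ}

theorem intervalIntegrable_sum_Icc_floor (hY : 1 ≤ Y)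
    (hφ : ∀ n ∈ Icc 1 ⌊Y⌋₊, IntegrableOn (φ n) (Set.Icc n Y)) :
    IntervalIntegrable (fun t => ∑ n ∈ Icc 1 ⌊t⌋₊, φ n t) volume 1 Y := by
  refine (intervalIntegrable_congr ((sum_Icc_floor_eqOn φ Y).mono ?_)).2 ?_
  · rw [Set.uIoc_of_le hY]
    exact Set.Ioc_subset_Iic_self
  · simpa only [sum_fn] using IntervalIntegrable.sum (Icc 1 ⌊Y⌋₊) fun n hn =>
      intervalIntegrable_indicator_Ici hY (hφ n hn)

theorem integral_sum_Icc_floor [NormedSpace ℝ E] (hY : 1 ≤ Y)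
    (hφ : ∀ n ∈ Icc 1 ⌊Y⌋₊, IntegrableOn (φ n) (Set.Icc n Y)) :
    ∫ t in 1..Y, ∑ n ∈ Icc 1 ⌊t⌋₊, φ n t = ∑ n ∈ Icc 1 ⌊Y⌋₊, ∫ t in n..Y, φ n t := by
  rw [intervalIntegral.integral_congr ((sum_Icc_floor_eqOn φ Y).mono ?_),
    intervalIntegral.integral_finsetSum fun n hn => intervalIntegrable_indicator_Ici hY (hφ n hn)]
  · exact sum_congr rfl fun n hn =>
      intervalIntegral.integral_indicator_Ici (natCast_mem_Icc_of_mem_Icc_floor hn)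
  · rw [Set.uIcc_of_le hY]
    exact Set.Icc_subset_Iic_self

end Floor

theorem integrableOn_comp_div_div (f : ℝ → ℂ) {a b c : ℝ} (hc : 0 < c) (ha : 0 < a)
    (hf : IntegrableOn f (Set.Icc (c / b) (c / a))) :
    IntegrableOn (fun t => f (c / t) / t) (Set.Icc a b) := by
  have hpos : ∀ x ∈ Set.Icc a b, 0 < x := fun x hx => ha.trans_le hx.1
  have hderiv : ∀ x ∈ Set.Icc a b,
      HasDerivWithinAt (fun x => c / x) (-(c / x ^ 2)) (Set.Icc a b) x := fun x hx =>
    ((hasDerivAt_inv (hpos x hx).ne').const_mul c).hasDerivWithinAt.congr_deriv (by ring)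
  have hinj : Set.InjOn (fun x => c / x) (Set.Icc a b) := fun x hx y hy hxy => by
    simpa [div_eq_div_iff (hpos x hx).ne' (hpos y hy).ne', hc.ne', eq_comm] using hxy
  have hmaps : (fun x => c / x) '' Set.Icc a b ⊆ Set.Icc (c / b) (c / a) := by
    rintro _ ⟨x, hx, rfl⟩
    exact ⟨div_le_div_of_nonneg_left hc.le (hpos x hx) hx.2,
      div_le_div_of_nonneg_left hc.le ha hx.1⟩
  have hsmul := (integrableOn_image_iff_integrableOn_abs_deriv_smul measurableSet_Icc hderiv
    hinj f).1 (hf.mono_set hmaps)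
  refine ((hsmul.continuousOn_mul (g := fun x => ((x / c : ℝ) : ℂ))
    (by fun_prop) isCompact_Icc).congr_fun (fun x hx => ?_) measurableSet_Icc)
  have hx0 := hpos x hx
  have hx : (x : ℂ) ≠ 0 := Complex.ofReal_ne_zero.2 hx0.ne'
  have hc' : (c : ℂ) ≠ 0 := Complex.ofReal_ne_zero.2 hc.ne'
  dsimp only
  rw [abs_neg, abs_of_pos (by positivity), Complex.real_smul]
  push_cast
  field_simp

theorem integral_comp_div_div (f : ℝ → ℂ) {c : ℝ} (hc : c ≠ 0) (a b : ℝ) :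
    ∫ t in a..b, f (c / t) / t = ∫ u in a / c..b / c, f (1 / u) / u := by
  have hc' : (c : ℂ) ≠ 0 := Complex.ofReal_ne_zero.2 hc
  have hpt : ∀ t : ℝ, f (c / t) / t = (c : ℂ)⁻¹ * (f (1 / (t / c)) / ((t / c : ℝ) : ℂ)) := by
    intro t
    rw [one_div_div]
    push_cast
    field_simp
  simp_rw [hpt]
  rw [intervalIntegral.integral_const_mul,
    intervalIntegral.integral_comp_div (fun u => f (1 / u) / (u : ℂ)) hc,
    Complex.real_smul, inv_mul_cancel_left₀ hc']

theorem one_div_mul_sum_eq_sum (h : ℝ → ℂ) (g : ℕ → ℂ) (s : Finset ℕ) (t : ℝ) :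
    1 / (t : ℂ) * ∑ n ∈ s, g n * h (n / t) = ∑ n ∈ s, g n * (h (n / t) / t) := by
  rw [mul_sum]
  exact sum_congr rfl fun n _ => by ring

section Kernel

variable {h : ℝ → ℂ}

theorem integrableOn_comp_div_div_self
    (hh : ∀ a : ℝ, 0 < a → a ≤ 1 → IntegrableOn h (Set.Icc a 1)) {c b : ℝ} (hc : 0 < c)
    (hcb : c ≤ b) : IntegrableOn (fun t => h (c / t) / t) (Set.Icc c b) := by
  refine integrableOn_comp_div_div h hc hc ?_
  rw [div_self hc.ne']
  exact hh _ (div_pos hc (hc.trans_le hcb)) (div_le_one_of_le₀ hcb (hc.le.trans hcb))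

theorem integrableOn_mul_comp_div_div_of_mem_Icc_floor
    (hh : ∀ a : ℝ, 0 < a → a ≤ 1 → IntegrableOn h (Set.Icc a 1)) (g : ℕ → ℂ) {Y : ℝ} :
    ∀ n ∈ Icc 1 ⌊Y⌋₊, IntegrableOn (fun t => g n * (h (n / t) / t)) (Set.Icc n Y) := by
  intro n hn
  have hn := natCast_mem_Icc_of_mem_Icc_floor hn
  exact (integrableOn_comp_div_div_self hh (one_pos.trans_le hn.1) hn.2).const_mul (g n)

theorem intervalIntegrable_one_div_mul_sum_Icc_floor
    (hh : ∀ a : ℝ, 0 < a → a ≤ 1 → IntegrableOn h (Set.Icc a 1)) (g : ℕ → ℂ) {Y : ℝ}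
    (hY : 1 ≤ Y) :
    IntervalIntegrable (fun t => 1 / (t : ℂ) * ∑ n ∈ Icc 1 ⌊t⌋₊, g n * h (n / t)) volume 1 Y := by
  simp_rw [one_div_mul_sum_eq_sum]
  exact intervalIntegrable_sum_Icc_floor hY (integrableOn_mul_comp_div_div_of_mem_Icc_floor hh g)

theorem integral_one_div_mul_sum_Icc_floor
    (hh : ∀ a : ℝ, 0 < a → a ≤ 1 → IntegrableOn h (Set.Icc a 1)) (g : ℕ → ℂ) {Y : ℝ}
    (hY : 1 ≤ Y) :
    ∫ t in 1..Y, 1 / (t : ℂ) * ∑ n ∈ Icc 1 ⌊t⌋₊, g n * h (n / t)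
      = ∑ n ∈ Icc 1 ⌊Y⌋₊, g n * ∫ u in 1..Y / n, h (1 / u) / u := by
  simp_rw [one_div_mul_sum_eq_sum]
  rw [integral_sum_Icc_floor hY (integrableOn_mul_comp_div_div_of_mem_Icc_floor hh g)]
  refine sum_congr rfl fun n hn => ?_
  have hn0 : (n : ℝ) ≠ 0 := (one_pos.trans_le (natCast_mem_Icc_of_mem_Icc_floor hn).1).ne'
  rw [intervalIntegral.integral_const_mul, integral_comp_div_div h hn0, div_self hn0]

end Kernel

/-- The Identity Factory (Theorem OFD). `H'` is the a.e. derivative of the locally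
absolutely continuous function `H`, encoded by the fundamental theorem of calculus
hypothesis `hH`. -/
theorem identity_factory (f g : ℕ → ℂ) (h : ℝ → ℂ) (H H' : ℝ → ℂ)
    (hh : ∀ a : ℝ, 0 < a → a ≤ 1 → IntegrableOn h (Set.Icc a 1))
    (hH' : ∀ b : ℝ, 1 ≤ b → IntervalIntegrable H' volume 1 b)
    (hH : ∀ t : ℝ, 1 ≤ t → H t = H 1 + ∫ u in (1:ℝ)..t, H' u)
    (X : ℝ) (hX : 1 ≤ X) :
    (∑ n ∈ Finset.Icc 1 ⌊X⌋₊, f n * H (X / n))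
        - H 1 * (∑ n ∈ Finset.Icc 1 ⌊X⌋₊, f n)
      = (∫ t in (1:ℝ)..X,
          (∑ m ∈ Finset.Icc 1 ⌊X / t⌋₊, ∑ d ∈ m.divisors, f d * g (m / d))
            * h (1 / t) / t)
        + ∫ t in (1:ℝ)..X,
            (∑ n ∈ Finset.Icc 1 ⌊X / t⌋₊, f n)
              * (H' t - (1 / t) * ∑ n ∈ Finset.Icc 1 ⌊t⌋₊, g n * h (n / t)) := by
  have hK := intervalIntegrable_one_div_mul_sum_Icc_floor hh g hX
  have hX_div : ∀ n ∈ Icc 1 ⌊X⌋₊, 1 ≤ X / n := fun n hn =>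
    have hn := natCast_mem_Icc_of_mem_Icc_floor hn
    (one_le_div₀ (one_pos.trans_le hn.1)).2 hn.2
  have hP : ∫ t in (1:ℝ)..X, (∑ n ∈ Icc 1 ⌊X / t⌋₊, f n) * H' t
      = ∑ n ∈ Icc 1 ⌊X⌋₊, f n * H (X / n) - H 1 * ∑ n ∈ Icc 1 ⌊X⌋₊, f n := by
    rw [integral_sum_Icc_floor_div_mul f hX (hH' X hX), mul_sum, ← sum_sub_distrib]
    exact sum_congr rfl fun n hn => by rw [hH _ (hX_div n hn)]; ring
  have hQ : ∫ t in (1:ℝ)..X,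
        (∑ n ∈ Icc 1 ⌊X / t⌋₊, f n) * (1 / t * ∑ n ∈ Icc 1 ⌊t⌋₊, g n * h (n / t))
      = ∑ d ∈ Icc 1 ⌊X⌋₊, f d * ∑ e ∈ Icc 1 (⌊X⌋₊ / d), g e *
          ∫ u in (1:ℝ)..X / ((d * e : ℕ) : ℝ), h (1 / u) / u := by
    rw [integral_sum_Icc_floor_div_mul f hX hK]
    refine sum_congr rfl fun d hd => ?_
    rw [integral_one_div_mul_sum_Icc_floor hh g (hX_div d hd), Nat.floor_div_natCast]
    simp only [Nat.cast_mul, div_div]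
  have hR : ∫ t in (1:ℝ)..X,
        (∑ m ∈ Icc 1 ⌊X / t⌋₊, ∑ d ∈ m.divisors, f d * g (m / d)) * h (1 / t) / t
      = ∑ m ∈ Icc 1 ⌊X⌋₊, (∑ d ∈ m.divisors, f d * g (m / d)) *
          ∫ u in (1:ℝ)..X / m, h (1 / u) / u := by
    simp_rw [mul_div_assoc]
    exact integral_sum_Icc_floor_div_mul _ hX ((intervalIntegrable_iff_integrableOn_Icc_of_le hX).2
      (integrableOn_comp_div_div_self hh one_pos hX))
  have hsplit := intervalIntegral.integral_sub
    (intervalIntegrable_sum_Icc_floor_div_mul f hX (hH' X hX))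
    (intervalIntegrable_sum_Icc_floor_div_mul f hX hK)
  simp_rw [← mul_sub] at hsplit
  rw [hsplit, hP, hQ, hR, sum_mul_sum_Icc_div_eq_sum_divisors f g
    (fun m => ∫ u in (1:ℝ)..X / m, h (1 / u) / u)]
  ring
end

section
/- For any positive integer n, the Dirichlet convolution G₁(n) = ∑_{d₁d₂ = n, gcd(d₁,q)=1} μ(d₁)·(−1)^{d₂+1} equals 1_{n | q^∞}(n) − 2·1_{2 | n and (n/2) | q^∞}(n), where d | q^∞ means every prime factor of d divides q. -/
/-!
Since `(-1)^(k+1) = 1 - 2·1_{2 ∣ k}`, the sum is `F n - 2·1_{2 ∣ n}·F (n/2)` with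
`F = (μ·1_{(·, q) = 1}) * ζ`. This `F` is multiplicative and `F (p^k) = 1 + μ p·1_{p ∤ q} = 1_{p ∣ q}`
for `k ≥ 1`, so `F n = 1_{n ∣ q^∞}`.
-/

open Finset
open scoped Classical

namespace ArithmeticFunction

open scoped ArithmeticFunction.Moebius ArithmeticFunction.zeta

def coprimeMoebius (q : ℕ) : ArithmeticFunction ℤ :=
  ⟨fun d => if d.Coprime q then μ d else 0, by simp⟩

theorem coprimeMoebius_apply (q d : ℕ) :
    coprimeMoebius q d = if d.Coprime q then μ d else 0 :=
  rfl

theorem isMultiplicative_coprimeMoebius (q : ℕ) : (coprimeMoebius q).IsMultiplicative := by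
  rw [IsMultiplicative.iff_ne_zero]
  refine ⟨by simp [coprimeMoebius_apply], fun {m n} _ _ hmn => ?_⟩
  simp only [coprimeMoebius_apply, Nat.coprime_mul_iff_left,
    isMultiplicative_moebius.map_mul_of_coprime hmn, ite_zero_mul_ite_zero]

theorem coprimeMoebius_mul_zeta_apply_prime_pow (q : ℕ) {p k : ℕ} (hp : p.Prime) (hk : k ≠ 0) :
    (coprimeMoebius q * ζ) (p ^ k) = if p ∣ q then 1 else 0 := by
  obtain ⟨j, rfl⟩ := Nat.exists_eq_succ_of_ne_zero hk
  have higher : ∀ i, coprimeMoebius q (p ^ (i + 2)) = 0 := fun i => by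
    simp [coprimeMoebius_apply, moebius_apply_prime_pow hp]
  rw [coe_mul_zeta_apply, Nat.sum_divisors_prime_pow hp, sum_range_succ', sum_range_succ']
  simp only [higher, sum_const_zero, coprimeMoebius_apply, hp.coprime_iff_not_dvd,
    moebius_apply_prime hp, zero_add, pow_one, pow_zero, Nat.coprime_one_left_eq_true, if_true,
    moebius_apply_one]
  split_ifs <;> simp

theorem coprimeMoebius_mul_zeta_apply (q : ℕ) {n : ℕ} (hn : n ≠ 0) :
    (coprimeMoebius q * ζ) n = if ∀ p : ℕ, p.Prime → p ∣ n → p ∣ q then 1 else 0 := by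
  have hmul := (isMultiplicative_coprimeMoebius q).mul isMultiplicative_zeta.natCast
  rw [hmul.multiplicative_factorization _ hn, Finsupp.prod, Nat.support_factorization]
  have hlocal : ∀ p ∈ n.primeFactors,
      (coprimeMoebius q * ζ) (p ^ n.factorization p) = if p ∣ q then 1 else 0 := fun p hp =>
    have hp' := Nat.prime_of_mem_primeFactors hp
    coprimeMoebius_mul_zeta_apply_prime_pow q hp'
      (hp'.factorization_pos_of_dvd hn (Nat.dvd_of_mem_primeFactors hp)).ne'
  rw [prod_congr rfl hlocal, prod_boole]
  simp [Nat.mem_primeFactors, hn]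

end ArithmeticFunction

theorem Nat.filter_dvd_div_divisors {n k : ℕ} (hkn : k ∣ n) :
    {d ∈ n.divisors | k ∣ n / d} = (n / k).divisors := by
  ext d
  rcases eq_or_ne n 0 with rfl | hn
  · simp
  have hk : k ≠ 0 := ne_zero_of_dvd_ne_zero hn hkn
  simp only [mem_filter, Nat.mem_divisors, ne_eq, hn, (Nat.div_ne_zero_iff_of_dvd hkn).2 ⟨hn, hk⟩,
    not_false_eq_true, and_true, Nat.dvd_div_iff_mul_dvd hkn]
  constructor
  · rintro ⟨hd, hkd⟩
    rwa [Nat.dvd_div_iff_mul_dvd hd, mul_comm] at hkd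
  · intro hkd
    refine ⟨(dvd_mul_left d k).trans hkd, ?_⟩
    rwa [Nat.dvd_div_iff_mul_dvd ((dvd_mul_left d k).trans hkd), mul_comm]

theorem Nat.sum_divisors_ite_dvd_div {M : Type*} [AddCommMonoid M] (f : ℕ → M) (n k : ℕ) :
    ∑ d ∈ n.divisors, (if k ∣ n / d then f d else 0)
      = if k ∣ n then ∑ d ∈ (n / k).divisors, f d else 0 := by
  split_ifs with hkn
  · rw [← sum_filter, Nat.filter_dvd_div_divisors hkn]
  · refine sum_eq_zero fun d hd => if_neg fun hk => hkn ?_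
    exact hk.trans (Nat.div_dvd_of_dvd (Nat.dvd_of_mem_divisors hd))

theorem neg_one_pow_succ_eq_one_sub_two_mul_ite {R : Type*} [Ring R] (m : ℕ) :
    (-1 : R) ^ (m + 1) = 1 - 2 * if 2 ∣ m then 1 else 0 := by
  rcases Nat.even_or_odd m with hm | hm
  · rw [if_pos hm.two_dvd, hm.add_one.neg_one_pow]
    norm_num
  · rw [if_neg (Nat.not_even_iff_odd.mpr hm ∘ even_iff_two_dvd.mpr), hm.add_one.neg_one_pow]
    simp

theorem G1_convolution_identity_general (q n : ℕ) (hn : 0 < n) :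
    (∑ d ∈ n.divisors,
        (if Nat.gcd d q = 1 then (ArithmeticFunction.moebius d : ℤ) else 0)
          * (-1) ^ (n / d + 1))
      = (if ∀ p : ℕ, p.Prime → p ∣ n → p ∣ q then (1 : ℤ) else 0)
        - 2 * (if 2 ∣ n ∧ ∀ p : ℕ, p.Prime → p ∣ n / 2 → p ∣ q then (1 : ℤ) else 0) := by
  set g : ℕ → ℤ := fun d => if Nat.gcd d q = 1 then ArithmeticFunction.moebius d else 0
  have hg : ∀ m, m ≠ 0 →
      ∑ d ∈ m.divisors, g d = if ∀ p : ℕ, p.Prime → p ∣ m → p ∣ q then 1 else 0 := by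
    intro m hm
    rw [← ArithmeticFunction.coprimeMoebius_mul_zeta_apply q hm,
      ArithmeticFunction.coe_mul_zeta_apply]
    rfl
  calc ∑ d ∈ n.divisors, g d * (-1) ^ (n / d + 1)
      = ∑ d ∈ n.divisors, g d - 2 * ∑ d ∈ n.divisors, (if 2 ∣ n / d then g d else 0) := by
        rw [mul_sum, ← sum_sub_distrib]
        refine sum_congr rfl fun d _ => ?_
        rw [neg_one_pow_succ_eq_one_sub_two_mul_ite]
        split_ifs <;> ring
    _ = _ := by
      rw [Nat.sum_divisors_ite_dvd_div, hg n hn.ne']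
      by_cases h2 : 2 ∣ n
      · rw [if_pos h2, hg _ (Nat.div_ne_zero_iff_of_dvd h2 |>.2 ⟨hn.ne', two_ne_zero⟩)]
        simp [h2]
      · simp [h2]

theorem G1_convolution_identity (q n : ℕ) (hq : 0 < q) (hn : 0 < n) :
    (∑ d ∈ n.divisors,
        (if Nat.gcd d q = 1 then (ArithmeticFunction.moebius d : ℤ) else 0)
          * (-1) ^ (n / d + 1))
      = (if ∀ p : ℕ, p.Prime → p ∣ n → p ∣ q then (1 : ℤ) else 0)
        - 2 * (if 2 ∣ n ∧ ∀ p : ℕ, p.Prime → p ∣ n / 2 → p ∣ q then (1 : ℤ) else 0) :=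
  G1_convolution_identity_general q n hn
end

section
/- For any positive integer q and real X > 0, ∑_{n ≤ X} G₁(n)/n = ∑_{X/2 < ℓ ≤ X, ℓ | q^∞} 1/ℓ, where G₁(n) = ∑_{d₁d₂=n, gcd(d₁,q)=1} μ(d₁)·(−1)^{d₂+1}. -/
/-!
Writing `(-1)^(m+1) = 1 - 2·[2 ∣ m]` gives `G₁(n) = g(n) - 2·[2 ∣ n]·g(n/2)` with
`g(n) = ∑_{d ∣ n, (d,q)=1} μ(d)`. As `g = (μ·1_{(·,q)=1}) * 1` is multiplicative with
`g(p^k) = 1 - [p ∤ q]`, it is the indicator of `n ∣ q^∞`. Hence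
`∑_{n ≤ N} G₁(n)/n = ∑_{n ≤ N} g(n)/n - ∑_{m ≤ N/2} g(m)/m`, which telescopes to the sum over
`N/2 < n ≤ N`; finally `⌊X/2⌋ = ⌊X⌋/2`.
-/

open Finset
open scoped Classical
open scoped ArithmeticFunction.Moebius ArithmeticFunction.zeta

namespace ArithmeticFunction

theorem IsMultiplicative.prodPrimeFactors_one_sub {R : Type*} [CommRing R]
    {f : ArithmeticFunction R} (hf : f.IsMultiplicative) {n : ℕ} (hn : n ≠ 0) :
    ∏ p ∈ n.primeFactors, (1 - f p) = ∑ d ∈ n.divisors, μ d * f d := by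
  have key : ArithmeticFunction.prodPrimeFactors (fun p => 1 - f p)
      = ArithmeticFunction.pmul (μ : ArithmeticFunction R) f * ζ := by
    refine (eq_iff_eq_on_prime_powers _ (IsMultiplicative.prodPrimeFactors _) _
      ((isMultiplicative_moebius.intCast.pmul hf).mul isMultiplicative_zeta.natCast)).2 ?_
    intro p k hp
    rcases k.eq_zero_or_pos with rfl | hk
    · simp [hf.map_one]
    rw [prodPrimeFactors_apply (pow_ne_zero _ hp.ne_zero), Nat.primeFactors_prime_pow hk.ne' hp,
      coe_mul_zeta_apply, Nat.sum_divisors_prime_pow hp, sum_range_succ', sum_eq_single 0]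
    · simp [moebius_apply_prime hp, hf.map_one, sub_eq_neg_add]
    · intro i _ hi
      simp [moebius_apply_prime_pow hp (Nat.succ_ne_zero i), hi]
    · exact fun h => absurd (by simpa using h) hk.ne'
  rw [← prodPrimeFactors_apply hn, key, coe_mul_zeta_apply]
  simp [pmul_apply]

-- The condition `n ≠ 0` is needed for `q = 1`, where `0` is coprime to `q`.
def coprimeIndicator (R : Type*) [MonoidWithZero R] (q : ℕ) : ArithmeticFunction R :=
  ⟨fun n => if n ≠ 0 ∧ n.Coprime q then 1 else 0, by simp⟩

theorem coprimeIndicator_apply {R : Type*} [MonoidWithZero R] {q n : ℕ} (hn : n ≠ 0) :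
    coprimeIndicator R q n = if n.Coprime q then 1 else 0 := by
  simp [coprimeIndicator, hn]

theorem isMultiplicative_coprimeIndicator (R : Type*) [MonoidWithZero R] (q : ℕ) :
    (coprimeIndicator R q).IsMultiplicative := by
  rw [IsMultiplicative.iff_ne_zero]
  refine ⟨by simp [coprimeIndicator], fun {m n} hm hn _ => ?_⟩
  simp only [coprimeIndicator_apply (mul_ne_zero hm hn), coprimeIndicator_apply hm,
    coprimeIndicator_apply hn, Nat.coprime_mul_iff_left, ite_zero_mul_ite_zero, mul_one]

end ArithmeticFunction

open ArithmeticFunction in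
theorem Nat.sum_divisors_coprime_moebius {R : Type*} [CommRing R] (q : ℕ) {n : ℕ} (hn : n ≠ 0) :
    ∑ d ∈ n.divisors, (if d.Coprime q then (μ d : R) else 0)
      = if ∀ p : ℕ, p.Prime → p ∣ n → p ∣ q then 1 else 0 := by
  have hterm : ∀ d ∈ n.divisors,
      (μ d : R) * coprimeIndicator R q d = if d.Coprime q then (μ d : R) else 0 := by
    intro d hd
    rw [coprimeIndicator_apply (Nat.pos_of_mem_divisors hd).ne', mul_ite, mul_one, mul_zero]
  have hfactor : ∀ p ∈ n.primeFactors, 1 - coprimeIndicator R q p = if p ∣ q then 1 else 0 := by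
    intro p hp
    have hp' := Nat.prime_of_mem_primeFactors hp
    rw [coprimeIndicator_apply hp'.ne_zero]
    by_cases hpq : p ∣ q <;> simp [hp'.coprime_iff_not_dvd, hpq]
  rw [← sum_congr rfl hterm, ← (isMultiplicative_coprimeIndicator R q).prodPrimeFactors_one_sub hn,
    prod_congr rfl hfactor, prod_boole]
  simp [Nat.mem_primeFactors, hn]

theorem Nat.divisors_filter_dvd_div {n k : ℕ} (hk : k ∣ n) :
    {d ∈ n.divisors | k ∣ n / d} = (n / k).divisors := by
  obtain ⟨m, rfl⟩ := hk
  rcases k.eq_zero_or_pos with rfl | hk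
  · simp
  ext d
  simp only [mem_filter, Nat.mem_divisors, Nat.mul_div_cancel_left m hk]
  constructor
  · rintro ⟨⟨hd, hkm⟩, hkd⟩
    rw [Nat.dvd_div_iff_mul_dvd hd, mul_comm, Nat.mul_dvd_mul_iff_left hk] at hkd
    exact ⟨hkd, right_ne_zero_of_mul hkm⟩
  · rintro ⟨hd, hm⟩
    have hdkm : d ∣ k * m := dvd_mul_of_dvd_right hd k
    refine ⟨⟨hdkm, mul_ne_zero hk.ne' hm⟩, ?_⟩
    rw [Nat.dvd_div_iff_mul_dvd hdkm, mul_comm]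
    exact mul_dvd_mul_left k hd

theorem neg_one_pow_succ_eq_one_sub {R : Type*} [Ring R] (m : ℕ) :
    (-1 : R) ^ (m + 1) = 1 - if 2 ∣ m then 2 else 0 := by
  rcases Nat.even_or_odd m with h | h
  · rw [h.add_one.neg_one_pow, if_pos h.two_dvd]; norm_num
  · rw [h.add_one.neg_one_pow, if_neg (Nat.not_even_iff_odd.2 h ∘ even_iff_two_dvd.2)]; simp

theorem Nat.sum_divisors_mul_neg_one_pow {R : Type*} [Ring R] (c : ℕ → R) (n : ℕ) :
    ∑ d ∈ n.divisors, c d * (-1) ^ (n / d + 1)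
      = ∑ d ∈ n.divisors, c d - if 2 ∣ n then 2 * ∑ d ∈ (n / 2).divisors, c d else 0 := by
  simp only [neg_one_pow_succ_eq_one_sub, mul_sub, mul_one, mul_ite, mul_zero, sum_sub_distrib]
  rw [← sum_filter]
  split_ifs with h2
  · rw [← Nat.divisors_filter_dvd_div h2]
    simp only [mul_two, two_mul, sum_add_distrib]
  · refine congrArg _ (sum_eq_zero fun d hd => ?_)
    rw [mem_filter, Nat.mem_divisors] at hd
    exact absurd (hd.2.trans (Nat.div_dvd_of_dvd hd.1.1)) h2

theorem sum_Icc_ite_dvd_div {K : Type*} [Field K] [CharZero K] (a : ℕ → K) {k : ℕ} (hk : k ≠ 0)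
    (N : ℕ) :
    ∑ n ∈ Icc 1 N, (if k ∣ n then k * a (n / k) else 0) / n = ∑ m ∈ Icc 1 (N / k), a m / m := by
  have hk' : 0 < k := Nat.pos_of_ne_zero hk
  simp only [ite_div, zero_div]
  rw [← sum_filter]
  refine sum_nbij' (· / k) (k * ·) ?_ ?_ ?_ ?_ ?_
  · simp only [mem_filter, mem_Icc, Nat.le_div_iff_mul_le hk']
    rintro n ⟨⟨h1, hN⟩, ⟨m, rfl⟩⟩
    have hm : 0 < m := Nat.pos_of_ne_zero (by rintro rfl; simp at h1)
    rw [Nat.mul_div_cancel_left m hk', one_mul, mul_comm m]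
    exact ⟨Nat.le_mul_of_pos_right k hm, hN⟩
  · simp only [mem_filter, mem_Icc, Nat.le_div_iff_mul_le hk']
    rintro m ⟨h1, hN⟩
    exact ⟨⟨by nlinarith, by linarith⟩, dvd_mul_right k m⟩
  · intro n hn
    exact Nat.mul_div_cancel' (mem_filter.1 hn).2
  · intro m _
    exact Nat.mul_div_cancel_left m hk'
  · intro n hn
    obtain ⟨m, rfl⟩ := (mem_filter.1 hn).2
    rw [Nat.mul_div_cancel_left m hk', Nat.cast_mul, mul_div_mul_left _ _ (by exact_mod_cast hk)]

theorem G1_partial_sum_general (q : ℕ) (X : ℝ) :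
    ∑ n ∈ Finset.Icc 1 ⌊X⌋₊,
        ((∑ d ∈ n.divisors,
          (if Nat.gcd d q = 1 then (ArithmeticFunction.moebius d : ℝ) else 0)
            * (-1) ^ (n / d + 1)) / n)
      = ∑ ℓ ∈ Finset.Ioc ⌊X / 2⌋₊ ⌊X⌋₊,
          (if ∀ p : ℕ, p.Prime → p ∣ ℓ → p ∣ q then (1 : ℝ) / ℓ else 0) := by
  set g : ℕ → ℝ := fun n => if ∀ p : ℕ, p.Prime → p ∣ n → p ∣ q then 1 else 0
  set N := ⌊X⌋₊
  have hG : ∀ n ∈ Icc 1 N,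
      (∑ d ∈ n.divisors, (if Nat.gcd d q = 1 then (μ d : ℝ) else 0) * (-1) ^ (n / d + 1)) / n
        = g n / n - (if 2 ∣ n then ((2 : ℕ) : ℝ) * g (n / 2) else 0) / n := by
    intro n hn
    have hn0 : n ≠ 0 := by simp at hn; omega
    rw [Nat.sum_divisors_mul_neg_one_pow, sub_div, Nat.sum_divisors_coprime_moebius q hn0]
    by_cases h2 : 2 ∣ n
    · rw [if_pos h2, if_pos h2, Nat.sum_divisors_coprime_moebius q (by omega : n / 2 ≠ 0),
        Nat.cast_ofNat]
    · rw [if_neg h2, if_neg h2]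
  have hIcc : ∀ M, Icc 1 M = Ioc 0 M := fun M => Icc_add_one_left_eq_Ioc 0 M
  rw [sum_congr rfl hG, sum_sub_distrib, sum_Icc_ite_dvd_div g two_ne_zero,
    Nat.floor_div_ofNat, sub_eq_iff_eq_add', hIcc, hIcc,
    ← sum_Ioc_consecutive _ (Nat.zero_le (N / 2)) (Nat.div_le_self N 2)]
  simp only [g, ite_div, zero_div]
  rfl

theorem G1_partial_sum (q : ℕ) (hq : 0 < q) (X : ℝ) (hX : 0 < X) :
    ∑ n ∈ Finset.Icc 1 ⌊X⌋₊,
        ((∑ d ∈ n.divisors,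
          (if Nat.gcd d q = 1 then (ArithmeticFunction.moebius d : ℝ) else 0)
            * (-1) ^ (n / d + 1)) / n)
      = ∑ ℓ ∈ Finset.Ioc ⌊X / 2⌋₊ ⌊X⌋₊,
          (if ∀ p : ℕ, p.Prime → p ∣ ℓ → p ∣ q then (1 : ℝ) / ℓ else 0) :=
  G1_partial_sum_general q X
end

section
/- For complex s with Re s = σ > 0 and real X > 0, |∑_{n ≤ X} (−1)^{n+1}/n^s − C(s)| ≤ (σ + |s|)/(σ X^σ), where C(s) = (1 − 2^{1−s})ζ(s) (with C(1) = log 2). -/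
/-!
Pair consecutive terms. Since `(2k+1)^{-s} - (2k+2)^{-s} = s ∫_{2k+1}^{2k+2} t^{-s-1} dt`, the
`k`-th pair has norm at most `(|s|/σ)((2k+1)^{-σ} - (2k+2)^{-σ})`, so the paired series converges
locally uniformly on `Re s > 0` and its tail after `m` pairs is at most `(|s|/σ)(2m+1)^{-σ}` by
telescoping. For `Re s > 1` splitting `ζ` into odd and even terms shows that the paired series is
`(1 - 2^{1-s}) ζ(s)`. This function, completed by `log 2` at `s = 1`, is entire, because the
factor `1 - 2^{1-s}` vanishes to first order at the simple pole of `ζ`; the identity theorem then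
identifies it with the paired series on `Re s > 0`. A partial sum with an odd number of terms
differs from a paired one by a single term of size `(N+1)^{-σ}`.
-/

open Finset Filter Topology

theorem norm_ofReal_cpow_neg_sub_le_integral (s : ℂ) {a b : ℝ} (ha : 0 < a) (hab : a ≤ b) :
    ‖(a : ℂ) ^ (-s) - (b : ℂ) ^ (-s)‖ ≤ ‖s‖ * ∫ t in a..b, t ^ (-s.re - 1) := by
  rcases eq_or_ne s 0 with rfl | hs
  · simp
  have hint : ∫ t in a..b, (t : ℂ) ^ (-s - 1) = ((b : ℂ) ^ (-s) - (a : ℂ) ^ (-s)) / (-s) := by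
    rw [integral_cpow (Or.inr ⟨by simpa [sub_eq_neg_self] using hs,
      Set.notMem_uIcc_of_lt ha (ha.trans_le hab)⟩)]
    ring_nf
  have hnorm : ∀ t ∈ Set.uIcc a b, ‖(t : ℂ) ^ (-s - 1)‖ = t ^ (-s.re - 1) := fun t ht => by
    rw [Complex.norm_cpow_eq_rpow_re_of_pos (ha.trans_le (Set.uIcc_of_le hab ▸ ht).1)]
    simp
  calc ‖(a : ℂ) ^ (-s) - (b : ℂ) ^ (-s)‖ = ‖s‖ * ‖∫ t in a..b, (t : ℂ) ^ (-s - 1)‖ := by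
        rw [hint, norm_div, norm_neg, norm_sub_rev, mul_div_cancel₀ _ (norm_ne_zero_iff.mpr hs)]
    _ ≤ ‖s‖ * ∫ t in a..b, t ^ (-s.re - 1) := by
        gcongr
        exact (intervalIntegral.norm_integral_le_integral_norm hab).trans_eq
          (intervalIntegral.integral_congr hnorm)

theorem norm_ofReal_cpow_neg_sub_le {s : ℂ} (hs : 0 < s.re) {a b : ℝ} (ha : 0 < a) (hab : a ≤ b) :
    ‖(a : ℂ) ^ (-s) - (b : ℂ) ^ (-s)‖ ≤ ‖s‖ / s.re * (a ^ (-s.re) - b ^ (-s.re)) := by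
  refine (norm_ofReal_cpow_neg_sub_le_integral s ha hab).trans_eq ?_
  rw [integral_rpow (Or.inr ⟨by linarith, Set.notMem_uIcc_of_lt ha (ha.trans_le hab)⟩),
    sub_add_cancel]
  field_simp
  ring

theorem norm_ofReal_cpow_neg_sub_le_mul {s : ℂ} (hs : -1 ≤ s.re) {a b : ℝ} (ha : 0 < a)
    (hab : a ≤ b) : ‖(a : ℂ) ^ (-s) - (b : ℂ) ^ (-s)‖ ≤ ‖s‖ * (a ^ (-s.re - 1) * (b - a)) := by
  refine (norm_ofReal_cpow_neg_sub_le_integral s ha hab).trans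
    (mul_le_mul_of_nonneg_left ?_ (norm_nonneg s))
  calc ∫ t in a..b, t ^ (-s.re - 1) ≤ ∫ _ in a..b, a ^ (-s.re - 1) := by
        refine intervalIntegral.integral_mono_on hab ?_ (by simp) fun t ht =>
          Real.rpow_le_rpow_of_nonpos ha ht.1 (by linarith)
        exact intervalIntegral.intervalIntegrable_rpow
          (Or.inr (Set.notMem_uIcc_of_lt ha (ha.trans_le hab)))
    _ = a ^ (-s.re - 1) * (b - a) := by simp [mul_comm]

section Telescoping

variable {E : Type*} [NormedAddCommGroup E] {f : ℕ → E} {u : ℕ → ℝ}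

theorem sum_range_norm_le_of_norm_le_sub (hu : ∀ k, 0 ≤ u k) (hf : ∀ k, ‖f k‖ ≤ u k - u (k + 1))
    (n : ℕ) : ∑ k ∈ range n, ‖f k‖ ≤ u 0 :=
  (sum_le_sum fun k _ => hf k).trans ((sum_range_sub' u n).trans_le (by linarith [hu n]))

theorem summable_of_norm_le_sub [CompleteSpace E] (hu : ∀ k, 0 ≤ u k)
    (hf : ∀ k, ‖f k‖ ≤ u k - u (k + 1)) : Summable f :=
  .of_norm (summable_of_sum_range_le (fun _ => norm_nonneg _)
    (sum_range_norm_le_of_norm_le_sub hu hf))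

theorem norm_tsum_nat_add_le_of_norm_le_sub (hu : ∀ k, 0 ≤ u k)
    (hf : ∀ k, ‖f k‖ ≤ u k - u (k + 1)) (m : ℕ) : ‖∑' k, f (k + m)‖ ≤ u m := by
  have hf' : ∀ k, ‖f (k + m)‖ ≤ u (k + m) - u (k + 1 + m) := fun k => by
    simpa only [add_right_comm] using hf (k + m)
  have hu' : ∀ k, 0 ≤ u (k + m) := fun k => hu (k + m)
  have hsum := sum_range_norm_le_of_norm_le_sub hu' hf'
  simpa using
    (norm_tsum_le_tsum_norm (summable_of_sum_range_le (fun _ => norm_nonneg _) hsum)).trans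
      (Real.tsum_le_of_sum_range_le (fun _ => norm_nonneg _) hsum)

end Telescoping

noncomputable def etaPair (s : ℂ) (k : ℕ) : ℂ :=
  ((2 * k + 1 : ℕ) : ℂ) ^ (-s) - ((2 * k + 2 : ℕ) : ℂ) ^ (-s)

theorem norm_etaPair_le {s : ℂ} (hs : 0 < s.re) (k : ℕ) :
    ‖etaPair s k‖ ≤ ‖s‖ / s.re * ((2 * k + 1 : ℕ) : ℝ) ^ (-s.re)
      - ‖s‖ / s.re * ((2 * (k + 1) + 1 : ℕ) : ℝ) ^ (-s.re) := by
  have h := norm_ofReal_cpow_neg_sub_le hs (a := (2 * k + 1 : ℕ)) (b := (2 * k + 2 : ℕ))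
    (by positivity) (by gcongr; omega)
  rw [etaPair]
  push_cast at h ⊢
  refine h.trans ?_
  rw [← mul_sub]
  refine mul_le_mul_of_nonneg_left (sub_le_sub_left ?_ _) (by positivity)
  exact Real.rpow_le_rpow_of_nonpos (by positivity) (by linarith) (by linarith)

theorem norm_etaPair_le_mul {s : ℂ} (hs : -1 ≤ s.re) (k : ℕ) :
    ‖etaPair s k‖ ≤ ‖s‖ * ((2 * k + 1 : ℕ) : ℝ) ^ (-s.re - 1) := by
  have h := norm_ofReal_cpow_neg_sub_le_mul hs (a := (2 * k + 1 : ℕ))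
    (b := (2 * k + 2 : ℕ)) (by positivity) (by gcongr; omega)
  rw [etaPair]
  push_cast at h ⊢
  norm_num at h
  exact h

theorem summable_etaPair {s : ℂ} (hs : 0 < s.re) : Summable (etaPair s) :=
  summable_of_norm_le_sub (fun _ => by positivity) (norm_etaPair_le hs)

theorem norm_tsum_etaPair_nat_add_le {s : ℂ} (hs : 0 < s.re) (m : ℕ) :
    ‖∑' k, etaPair s (k + m)‖ ≤ ‖s‖ / s.re * ((2 * m + 1 : ℕ) : ℝ) ^ (-s.re) :=
  norm_tsum_nat_add_le_of_norm_le_sub (fun _ => by positivity) (norm_etaPair_le hs) m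

theorem differentiableOn_tsum_etaPair :
    DifferentiableOn ℂ (fun s => ∑' k, etaPair s k) {s | 0 < s.re} := by
  intro s₀ hs₀
  set r := s₀.re / 2
  set R := ‖s₀‖ + 1
  have hr : 0 < r := half_pos hs₀
  let V : Set ℂ := {z | r < z.re} ∩ {z | ‖z‖ < R}
  have hV : IsOpen V := (isOpen_lt continuous_const Complex.continuous_re).inter
    (isOpen_lt continuous_norm continuous_const)
  have hs₀V : s₀ ∈ V :=
    ⟨show r < s₀.re from half_lt_self hs₀, show ‖s₀‖ < ‖s₀‖ + 1 from lt_add_one _⟩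
  have hmajorant : Summable fun k : ℕ => R * ((2 * k + 1 : ℕ) : ℝ) ^ (-r - 1) :=
    ((Real.summable_nat_rpow.mpr (by linarith)).comp_injective
      (fun a b h => by simpa using h)).mul_left R
  have hdiff : DifferentiableOn ℂ (fun s => ∑' k, etaPair s k) V := by
    refine Complex.differentiableOn_tsum_of_summable_norm hmajorant (fun k => ?_) hV
      fun k z (hz : r < z.re ∧ ‖z‖ < R) => ?_
    · refine (Differentiable.sub ?_ ?_).differentiableOn <;>
        exact (differentiable_id.neg).const_cpow (Or.inl (Nat.cast_ne_zero.mpr (by omega)))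
    · refine (norm_etaPair_le_mul (by linarith) k).trans
        (mul_le_mul hz.2.le ?_ (by positivity) (by positivity))
      exact Real.rpow_le_rpow_of_exponent_le (by norm_cast; omega) (by linarith)
  exact (hdiff.differentiableAt (hV.mem_nhds hs₀V)).differentiableWithinAt

theorem tsum_etaPair_eq_of_one_lt_re {s : ℂ} (hs : 1 < s.re) :
    ∑' k, etaPair s k = (1 - 2 ^ (1 - s)) * riemannZeta s := by
  set g : ℕ → ℂ := fun n => ((n + 1 : ℕ) : ℂ) ^ (-s)
  have hg : Summable g := by
    simpa [g, Complex.cpow_neg, ← one_div] using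
      (summable_nat_add_iff 1).mpr (Complex.summable_one_div_nat_cpow.mpr hs)
  have hzeta : riemannZeta s = ∑' n, g n := by
    simp [zeta_eq_tsum_one_div_nat_add_one_cpow hs, g, Complex.cpow_neg]
  have heven : ∀ k, g (2 * k + 1) = 2 ^ (-s) * g k := fun k => by
    simp only [g]
    rw [show 2 * k + 1 + 1 = 2 * (k + 1) by ring, Nat.cast_mul, Complex.natCast_mul_natCast_cpow,
      Nat.cast_ofNat]
  have hodd : Summable fun k => g (2 * k + 1) := by
    simpa only [heven] using hg.mul_left _
  have hev : Summable fun k => g (2 * k) :=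
    hg.comp_injective fun a b h => by simpa using h
  have h21 : (2 : ℂ) ^ (1 - s) = 2 * 2 ^ (-s) := by
    rw [sub_eq_add_neg, Complex.cpow_add _ _ two_ne_zero, Complex.cpow_one]
  calc ∑' k, etaPair s k = ∑' k, g (2 * k) - ∑' k, g (2 * k + 1) := by
        rw [← hev.tsum_sub hodd]
        rfl
    _ = (1 - 2 ^ (1 - s)) * riemannZeta s := by
        have hsplit := tsum_even_add_odd hev hodd
        rw [tsum_congr heven, tsum_mul_left] at hsplit ⊢
        rw [hzeta, h21]
        linear_combination hsplit

noncomputable def dirichletEta (s : ℂ) : ℂ :=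
  if s = 1 then (Real.log 2 : ℂ) else (1 - (2 : ℂ) ^ (1 - s)) * riemannZeta s

theorem tendsto_one_sub_two_cpow_mul_riemannZeta :
    Tendsto (fun s => (1 - (2 : ℂ) ^ (1 - s)) * riemannZeta s) (𝓝[≠] 1)
      (𝓝 (Real.log 2 : ℂ)) := by
  set f : ℂ → ℂ := fun s => 1 - (2 : ℂ) ^ (1 - s)
  have hf : HasDerivAt f (Real.log 2 : ℂ) 1 := by
    refine ((((hasDerivAt_id (1 : ℂ)).const_sub 1).const_cpow (c := 2)
      (Or.inl two_ne_zero)).const_sub 1).congr_deriv ?_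
    simp [Complex.ofReal_log zero_le_two]
  have hprod := (hasDerivAt_iff_tendsto_slope.mp hf).mul riemannZeta_residue_one
  rw [mul_one] at hprod
  refine hprod.congr' (eventually_nhdsWithin_of_forall fun s hs => ?_)
  have hs' : s - 1 ≠ 0 := sub_ne_zero.mpr hs
  simp only [slope_def_field, f, sub_self, Complex.cpow_zero, sub_zero]
  field_simp

theorem differentiable_dirichletEta : Differentiable ℂ dirichletEta := by
  have hcont : ContinuousAt dirichletEta 1 := by
    refine continuousWithinAt_compl_self.mp ?_
    simp only [ContinuousWithinAt, dirichletEta, if_pos]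
    exact tendsto_one_sub_two_cpow_mul_riemannZeta.congr'
      (eventually_nhdsWithin_of_forall fun s hs => (if_neg hs).symm)
  have hdiff : DifferentiableOn ℂ dirichletEta (Set.univ \ {1}) := fun s hs => by
    have hs1 : s ≠ 1 := hs.2
    refine DifferentiableAt.differentiableWithinAt ?_
    refine DifferentiableAt.congr_of_eventuallyEq ?_
      ((eventually_ne_nhds hs1).mono fun z hz => if_neg hz)
    exact ((differentiableAt_const _).sub ((differentiableAt_const _).sub differentiableAt_id
      |>.const_cpow (Or.inl two_ne_zero))).mul (differentiableAt_riemannZeta hs1)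
  exact differentiableOn_univ.mp
    ((Complex.differentiableOn_compl_singleton_and_continuousAt_iff univ_mem).mp ⟨hdiff, hcont⟩)

theorem tsum_etaPair_eq_dirichletEta {s : ℂ} (hs : 0 < s.re) :
    ∑' k, etaPair s k = dirichletEta s := by
  have hU : IsOpen {z : ℂ | 0 < z.re} := isOpen_lt continuous_const Complex.continuous_re
  have hnear : (fun z => ∑' k, etaPair z k) =ᶠ[𝓝 2] dirichletEta := by
    filter_upwards [(isOpen_lt continuous_const Complex.continuous_re).mem_nhds
      (show (1 : ℝ) < (2 : ℂ).re by norm_num)] with z hz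
    have hz1 : z ≠ 1 := fun h => by simp [h] at hz
    rw [tsum_etaPair_eq_of_one_lt_re hz, dirichletEta, if_neg hz1]
  exact (differentiableOn_tsum_etaPair.analyticOnNhd hU).eqOn_of_preconnected_of_eventuallyEq
    (differentiable_dirichletEta.differentiableOn.analyticOnNhd hU)
    (convex_halfSpace_re_gt 0).isPreconnected (show (0 : ℝ) < (2 : ℂ).re by norm_num) hnear hs

theorem sum_Icc_two_mul_eq_sum_etaPair (s : ℂ) (m : ℕ) :
    ∑ n ∈ Icc 1 (2 * m), (-1 : ℂ) ^ (n + 1) / (n : ℂ) ^ s = ∑ k ∈ range m, etaPair s k := by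
  induction m with
  | zero => simp
  | succ m ih =>
    rw [show 2 * (m + 1) = 2 * m + 1 + 1 by ring, sum_Icc_succ_top (by omega),
      sum_Icc_succ_top (by omega), ih, sum_range_succ, etaPair]
    simp [pow_succ, Complex.cpow_neg, div_eq_mul_inv]
    ring_nf

theorem norm_sum_Icc_sub_dirichletEta_le {s : ℂ} (hs : 0 < s.re) (N : ℕ) :
    ‖∑ n ∈ Icc 1 N, (-1 : ℂ) ^ (n + 1) / (n : ℂ) ^ s - dirichletEta s‖
      ≤ (1 + ‖s‖ / s.re) * ((N + 1 : ℕ) : ℝ) ^ (-s.re) := by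
  rw [← tsum_etaPair_eq_dirichletEta hs]
  set C := ‖s‖ / s.re
  have hC : 0 ≤ C := by positivity
  have hsplit := fun m => (summable_etaPair hs).sum_add_tsum_nat_add m
  obtain ⟨m, rfl | rfl⟩ := N.even_or_odd'
  · rw [sum_Icc_two_mul_eq_sum_etaPair, ← hsplit m, sub_add_cancel_left, norm_neg]
    exact (norm_tsum_etaPair_nat_add_le hs m).trans
      (mul_le_mul_of_nonneg_right (by linarith) (by positivity))
  · have hodd : ∑ n ∈ Icc 1 (2 * m + 1), (-1 : ℂ) ^ (n + 1) / (n : ℂ) ^ s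
        = ∑ k ∈ range (m + 1), etaPair s k + ((2 * m + 1 + 1 : ℕ) : ℂ) ^ (-s) := by
      have h := sum_Icc_two_mul_eq_sum_etaPair s (m + 1)
      rw [show 2 * (m + 1) = 2 * m + 1 + 1 by ring, sum_Icc_succ_top (by omega),
        Odd.neg_one_pow ⟨m + 1, by ring⟩] at h
      rw [← h, Complex.cpow_neg]
      ring
    rw [hodd, ← hsplit (m + 1), add_sub_add_left_eq_sub]
    have hmono : ((2 * (m + 1) + 1 : ℕ) : ℝ) ^ (-s.re) ≤ ((2 * m + 1 + 1 : ℕ) : ℝ) ^ (-s.re) :=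
      Real.rpow_le_rpow_of_nonpos (by positivity) (by push_cast; linarith) (by linarith)
    calc _ ≤ ‖((2 * m + 1 + 1 : ℕ) : ℂ) ^ (-s)‖ + ‖∑' k, etaPair s (k + (m + 1))‖ :=
          norm_sub_le _ _
      _ ≤ ((2 * m + 1 + 1 : ℕ) : ℝ) ^ (-s.re) + C * ((2 * m + 1 + 1 : ℕ) : ℝ) ^ (-s.re) := by
        rw [Complex.norm_natCast_cpow_of_pos (by omega), Complex.neg_re]
        exact add_le_add le_rfl ((norm_tsum_etaPair_nat_add_le hs (m + 1)).trans
          (mul_le_mul_of_nonneg_left hmono hC))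
      _ = (1 + C) * ((2 * m + 1 + 1 : ℕ) : ℝ) ^ (-s.re) := by ring

theorem alternating_sum_cpow (s : ℂ) (hσ : 0 < s.re) (X : ℝ) (hX : 0 < X) :
    ‖((∑ n ∈ Finset.Icc 1 ⌊X⌋₊, (-1 : ℂ) ^ (n + 1) / (n : ℂ) ^ s)
          - (if s = 1 then (Real.log 2 : ℂ)
             else (1 - (2 : ℂ) ^ (1 - s)) * riemannZeta s))‖
      ≤ (s.re + ‖s‖) / (s.re * X ^ s.re) := by
  have hfloor : X ≤ ((⌊X⌋₊ + 1 : ℕ) : ℝ) := by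
    push_cast
    exact (Nat.lt_floor_add_one X).le
  calc _ ≤ (1 + ‖s‖ / s.re) * ((⌊X⌋₊ + 1 : ℕ) : ℝ) ^ (-s.re) :=
        norm_sum_Icc_sub_dirichletEta_le hσ ⌊X⌋₊
    _ ≤ (1 + ‖s‖ / s.re) * X ^ (-s.re) :=
        mul_le_mul_of_nonneg_left (Real.rpow_le_rpow_of_nonpos hX hfloor (by linarith))
          (by positivity)
    _ = (s.re + ‖s‖) / (s.re * X ^ s.re) := by
        rw [Real.rpow_neg hX.le]
        field_simp
end

section
/- Let q be a positive integer and s complex with Re s = σ > σ₀ > 0. Then |∑_{ℓ > X, ℓ | q^∞} 1/ℓ^s| ≤ X^{−σ₀} · q^{σ−σ₀}/φ_{σ−σ₀}(q), where φ_ω(q) = q^ω ∏_{p | q}(1 − p^{−ω}). -/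
open Finset
open scoped Classical

/-! Rankin's trick: for `ℓ > X` one has `ℓ^{-σ} ≤ X^{-σ₀} ℓ^{-(σ-σ₀)}`, so the tail is bounded by
`X^{-σ₀}` times the full sum of `ℓ^{-(σ-σ₀)}` over the `q`-smooth `ℓ`, which is the Euler product
`∏_{p ∣ q} (1 - p^{-(σ-σ₀)})⁻¹ = q^{σ-σ₀} / φ_{σ-σ₀}(q)`. -/

noncomputable def Nat.rpowHom (r : ℝ) : ℕ →* ℝ where
  toFun n := (n : ℝ) ^ r
  map_one' := by simp
  map_mul' m n := by
    push_cast
    exact Real.mul_rpow m.cast_nonneg n.cast_nonneg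

theorem hasSum_indicator_factoredNumbers_rpow_neg {ω : ℝ} (hω : 0 < ω) (s : Finset ℕ) :
    HasSum ((Nat.factoredNumbers s).indicator fun n : ℕ ↦ (n : ℝ) ^ (-ω))
      (∏ p ∈ s with p.Prime, (1 - (p : ℝ) ^ (-ω))⁻¹) := by
  have hprime_lt_one {p : ℕ} (hp : p.Prime) : ‖Nat.rpowHom (-ω) p‖ < 1 := by
    have hp_pow_lt_one : (p : ℝ) ^ (-ω) < 1 :=
      Real.rpow_lt_one_of_one_lt_of_neg (by exact_mod_cast hp.one_lt) (neg_neg_of_pos hω)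
    simpa [Nat.rpowHom, abs_of_nonneg (Real.rpow_nonneg p.cast_nonneg _)] using hp_pow_lt_one
  exact hasSum_subtype_iff_indicator.mp
    (EulerProduct.summable_and_hasSum_factoredNumbers_prod_filter_prime_geometric
      hprime_lt_one s).2

theorem Nat.mem_factoredNumbers_primeFactors {q ℓ : ℕ} (hq : q ≠ 0) :
    ℓ ∈ Nat.factoredNumbers q.primeFactors ↔ ∀ p : ℕ, p.Prime → p ∣ ℓ → p ∣ q := by
  simp only [Nat.mem_factoredNumbers', Nat.mem_primeFactors, hq, ne_eq, not_false_eq_true,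
    and_true]
  exact forall₂_congr fun p hp ↦ imp_congr_right fun _ ↦ and_iff_right hp

theorem norm_one_div_natCast_cpow_le {ℓ : ℕ} {X σ₀ : ℝ} (s : ℂ) (hX : 0 < X) (hXℓ : X < ℓ)
    (hσ₀ : 0 ≤ σ₀) :
    ‖1 / (ℓ : ℂ) ^ s‖ ≤ X ^ (-σ₀) * (ℓ : ℝ) ^ (-(s.re - σ₀)) := by
  have hℓ : (0 : ℝ) < ℓ := hX.trans hXℓ
  calc ‖1 / (ℓ : ℂ) ^ s‖ = (ℓ : ℝ) ^ (-σ₀) * (ℓ : ℝ) ^ (-(s.re - σ₀)) := by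
        rw [norm_div, norm_one, Complex.norm_natCast_cpow_of_pos (by exact_mod_cast hℓ), one_div,
          ← Real.rpow_neg hℓ.le, ← Real.rpow_add hℓ]
        ring_nf
    _ ≤ X ^ (-σ₀) * (ℓ : ℝ) ^ (-(s.re - σ₀)) := by
        exact mul_le_mul_of_nonneg_right (Real.rpow_le_rpow_of_nonpos hX hXℓ.le
          (neg_nonpos.mpr hσ₀)) (Real.rpow_nonneg hℓ.le _)

theorem tail_sum_smooth_numbers (q : ℕ) (hq : 0 < q) (s : ℂ) (σ₀ : ℝ)
    (hσ₀ : 0 < σ₀) (hσ : σ₀ < s.re) (X : ℝ) (hX : 0 < X) :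
    ‖(∑' ℓ : ℕ, if X < ℓ ∧ (∀ p : ℕ, p.Prime → p ∣ ℓ → p ∣ q)
          then 1 / (ℓ : ℂ) ^ s else 0)‖
      ≤ X ^ (-σ₀) *
        ((q : ℝ) ^ (s.re - σ₀) /
          ((q : ℝ) ^ (s.re - σ₀) * ∏ p ∈ q.primeFactors, (1 - (p : ℝ) ^ (-(s.re - σ₀))))) := by
  have hmajorant := (hasSum_indicator_factoredNumbers_rpow_neg (sub_pos.mpr hσ)
    q.primeFactors).mul_left (X ^ (-σ₀))
  refine (tsum_of_norm_bounded hmajorant fun ℓ ↦ ?_).trans_eq ?_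
  · split_ifs with h
    · rw [Set.indicator_of_mem ((Nat.mem_factoredNumbers_primeFactors hq.ne').mpr h.2)]
      exact norm_one_div_natCast_cpow_le s hX h.1 hσ₀.le
    · rw [norm_zero]
      exact mul_nonneg (Real.rpow_nonneg hX.le _)
        (Set.indicator_nonneg (fun n _ ↦ Real.rpow_nonneg n.cast_nonneg _) ℓ)
  · rw [filter_true_of_mem fun p hp ↦ Nat.prime_of_mem_primeFactors hp, prod_inv_distrib,
      div_mul_cancel_left₀ (Real.rpow_pos_of_pos (by exact_mod_cast hq) _).ne']
end

section
/- For every ε > 0, 1/ε < ζ(1+ε), and also ζ(1+ε) ≤ e^{γε}/ε where γ is the Euler–Mascheroni constant. -/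
open Real Filter Topology

/-!
Both bounds compare `ζ(1 + ε) = ∑ (n + 1)^(-1-ε)` termwise with a telescoping series.
From below, `((n + 1)^(-ε) - (n + 2)^(-ε)) / ε < (n + 1)^(-1-ε)`, since `log (1 + 1/x) < 1/x`;
these differences sum to `1/ε`.
From above, `(n + 1)^(-1-ε) ≤ e^(γε)/ε · (e^(-ε Hₙ) - e^(-ε Hₙ₊₁))`, which sums to `e^(γε)/ε`.
This uses `1 - e^(-x) ≥ x e^(-x/2)` together with `Hₙ + 1/(2(n + 1)) ≤ γ + log (n + 1)`; the
latter holds because the left side minus `log (n + 1)` increases to `γ`, by the trapezoid bound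
`log (1 + 1/m) ≤ (1/m + 1/(m + 1))/2`. Both elementary inequalities are `t ≤ sinh t` for `t ≥ 0`.
-/

lemma log_le_half_sub_inv {x : ℝ} (hx : 1 ≤ x) : log x ≤ (x - x⁻¹) / 2 := by
  rw [← sinh_log (by linarith)]
  exact self_le_sinh_iff.mpr (log_nonneg hx)

lemma mul_exp_neg_half_le_one_sub_exp_neg {x : ℝ} (hx : 0 ≤ x) :
    x * exp (-(x / 2)) ≤ 1 - exp (-x) := by
  have h₁ : exp (x / 2) * exp (-(x / 2)) = 1 := by rw [← exp_add]; simp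
  have h₂ : exp (-(x / 2)) * exp (-(x / 2)) = exp (-x) := by rw [← exp_add]; ring_nf
  calc x * exp (-(x / 2)) ≤ 2 * sinh (x / 2) * exp (-(x / 2)) := by
        gcongr
        linarith [self_le_sinh_iff.mpr (by positivity : 0 ≤ x / 2)]
    _ = 1 - exp (-x) := by rw [sinh_eq]; linear_combination h₁ - h₂

lemma hasSum_sub_succ_of_antitone {b : ℕ → ℝ} {l : ℝ} (hb : Antitone b)
    (hlim : Tendsto b atTop (𝓝 l)) : HasSum (fun n ↦ b n - b (n + 1)) (b 0 - l) := by
  rw [hasSum_iff_tendsto_nat_of_nonneg fun n ↦ sub_nonneg.mpr (hb n.le_succ)]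
  simp_rw [Finset.sum_range_sub']
  exact tendsto_const_nhds.sub hlim

lemma hasSum_one_div_nat_add_one_rpow_riemannZeta {s : ℝ} (hs : 1 < s) :
    HasSum (fun n : ℕ ↦ 1 / ((n : ℝ) + 1) ^ s) (riemannZeta s).re := by
  have hsum : Summable fun n : ℕ ↦ 1 / ((n : ℝ) + 1) ^ s := by
    exact_mod_cast (summable_nat_add_iff 1).mpr (summable_one_div_nat_rpow.mpr hs)
  convert hsum.hasSum
  rw [zeta_eq_tsum_one_div_nat_add_one_cpow (by simpa using hs), ← Complex.ofReal_re (∑' _, _),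
    Complex.ofReal_tsum]
  congr 2 with n
  rw [Complex.ofReal_div, Complex.ofReal_cpow (by positivity)]
  norm_cast

lemma one_div_rpow_sub_one_div_add_one_rpow_div_lt {x ε : ℝ} (hx : 0 < x) (hε : 0 < ε) :
    (1 / x ^ ε - 1 / (x + 1) ^ ε) / ε < 1 / x ^ (1 + ε) := by
  set t := log ((x + 1) / x) with ht_def
  have ht : t < 1 / x := by
    have := log_lt_sub_one_of_pos (by positivity : 0 < (x + 1) / x)
      (by rw [Ne, div_eq_one_iff_eq hx.ne']; linarith)
    have e : (x + 1) / x - 1 = 1 / x := by field_simp; ring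
    linarith
  have hsplit : (x + 1) ^ ε = x ^ ε * exp (ε * t) := by
    rw [rpow_def_of_pos hx, rpow_def_of_pos (by positivity), ← exp_add, ht_def,
      log_div (by positivity) hx.ne']
    ring_nf
  rw [div_lt_iff₀ hε]
  calc 1 / x ^ ε - 1 / (x + 1) ^ ε = 1 / x ^ ε * (1 - exp (-(ε * t))) := by
        rw [hsplit, exp_neg]; field_simp
    _ ≤ 1 / x ^ ε * (ε * t) := by gcongr; linarith [add_one_le_exp (-(ε * t))]
    _ < 1 / x ^ ε * (ε * (1 / x)) := by gcongr
    _ = 1 / x ^ (1 + ε) * ε := by rw [rpow_add hx, rpow_one]; field_simp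

lemma hasSum_one_div_nat_add_one_rpow_sub_succ {ε : ℝ} (hε : 0 < ε) :
    HasSum (fun n : ℕ ↦ 1 / ((n : ℝ) + 1) ^ ε - 1 / ((n : ℝ) + 1 + 1) ^ ε) 1 := by
  have hlim : Tendsto (fun n : ℕ ↦ 1 / ((n : ℝ) + 1) ^ ε) atTop (𝓝 0) :=
    tendsto_const_nhds.div_atTop <| (tendsto_rpow_atTop hε).comp <|
      tendsto_atTop_add_const_right _ 1 tendsto_natCast_atTop_atTop
  simpa using hasSum_sub_succ_of_antitone (fun m n hmn ↦ by gcongr) hlim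

lemma monotone_harmonic : Monotone harmonic :=
  monotone_nat_of_le_succ fun n ↦ by
    rw [harmonic_succ]; simp only [le_add_iff_nonneg_right]; positivity

lemma tendsto_harmonic_atTop : Tendsto (fun n : ℕ ↦ (harmonic n : ℝ)) atTop atTop :=
  tendsto_atTop_mono log_add_one_le_harmonic <| tendsto_log_atTop.comp <|
    tendsto_natCast_atTop_atTop.comp (tendsto_add_atTop_nat 1)

lemma monotone_harmonic_add_one_div_two_mul_sub_log :
    Monotone fun n : ℕ ↦ (harmonic n : ℝ) + 1 / (2 * (n + 1)) - log (n + 1) := by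
  refine monotone_nat_of_le_succ fun n ↦ ?_
  have hlog := log_le_half_sub_inv (x := ((n : ℝ) + 2) / (n + 1))
    (by rw [le_div_iff₀ (by positivity)]; linarith)
  have e : (((n : ℝ) + 2) / (n + 1) - (((n : ℝ) + 2) / (n + 1))⁻¹) / 2 =
      1 / (2 * ((n : ℝ) + 1)) + 1 / (2 * ((n : ℝ) + 2)) := by
    field_simp; ring
  have e' : ((n : ℝ) + 1)⁻¹ = 2 * (1 / (2 * (n + 1))) := by field_simp
  rw [log_div (by positivity) (by positivity), e] at hlog
  rw [harmonic_succ]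
  push_cast
  rw [show (n : ℝ) + 1 + 1 = n + 2 by ring]
  linarith

lemma harmonic_add_one_div_two_mul_le (n : ℕ) :
    (harmonic n : ℝ) + 1 / (2 * (n + 1)) ≤ eulerMascheroniConstant + log (n + 1) := by
  suffices (harmonic n : ℝ) + 1 / (2 * (n + 1)) - log (n + 1) ≤ eulerMascheroniConstant by
    linarith
  refine monotone_harmonic_add_one_div_two_mul_sub_log.ge_of_tendsto ?_ n
  have h : Tendsto (fun n : ℕ ↦ 1 / (2 * ((n : ℝ) + 1))) atTop (𝓝 0) := by
    simpa [div_eq_mul_inv, mul_comm] using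
      tendsto_one_div_add_atTop_nhds_zero_nat.div_const (2 : ℝ)
  simpa [add_sub_right_comm] using tendsto_harmonic_sub_log_add_one.add h

lemma hasSum_exp_neg_mul_harmonic_sub_succ {ε : ℝ} (hε : 0 < ε) :
    HasSum (fun n : ℕ ↦ exp (-(ε * harmonic n)) - exp (-(ε * harmonic (n + 1)))) 1 := by
  simpa using hasSum_sub_succ_of_antitone (b := fun n : ℕ ↦ exp (-(ε * harmonic n)))
    (fun m n hmn ↦ by dsimp only; gcongr; exact_mod_cast monotone_harmonic hmn)
    (tendsto_exp_neg_atTop_nhds_zero.comp (tendsto_harmonic_atTop.const_mul_atTop hε))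

lemma one_div_rpow_one_add_le_of_add_one_div_two_mul_le {m h c ε : ℝ} (hm : 0 < m)
    (hε : 0 < ε) (hh : h + 1 / (2 * m) ≤ c + log m) :
    1 / m ^ (1 + ε) ≤ exp (c * ε) / ε * (exp (-(ε * h)) - exp (-(ε * (h + 1 / m)))) :=
  calc 1 / m ^ (1 + ε) = exp (c * ε) / ε * (ε / m * exp (-(ε * (c + log m)))) := by
        rw [rpow_add hm, rpow_one, rpow_def_of_pos hm,
          show -(ε * (c + log m)) = -(c * ε) + -(log m * ε) by ring, exp_add, exp_neg, exp_neg]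
        field_simp
    _ ≤ exp (c * ε) / ε * (ε / m * exp (-(ε * (h + 1 / (2 * m))))) := by gcongr
    _ = exp (c * ε) / ε * (exp (-(ε * h)) * (ε / m * exp (-(ε / m / 2)))) := by
        rw [show -(ε * (h + 1 / (2 * m))) = -(ε * h) + -(ε / m / 2) by ring, exp_add]
        ring
    _ ≤ exp (c * ε) / ε * (exp (-(ε * h)) * (1 - exp (-(ε / m)))) := by
        gcongr
        exact mul_exp_neg_half_le_one_sub_exp_neg (by positivity)
    _ = exp (c * ε) / ε * (exp (-(ε * h)) - exp (-(ε * (h + 1 / m)))) := by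
        rw [show -(ε * (h + 1 / m)) = -(ε * h) + -(ε / m) by ring, exp_add]
        ring

lemma one_div_rpow_one_add_le_mul_exp_neg_mul_harmonic_sub_succ {ε : ℝ} (hε : 0 < ε) (n : ℕ) :
    1 / ((n : ℝ) + 1) ^ (1 + ε) ≤ exp (eulerMascheroniConstant * ε) / ε *
      (exp (-(ε * harmonic n)) - exp (-(ε * harmonic (n + 1)))) := by
  rw [harmonic_succ]
  push_cast
  rw [inv_eq_one_div]
  exact one_div_rpow_one_add_le_of_add_one_div_two_mul_le n.cast_add_one_pos hε
    (harmonic_add_one_div_two_mul_le n)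

theorem zeta_one_add_eps_bounds (ε : ℝ) (hε : 0 < ε) :
    1 / ε < (riemannZeta (1 + ε)).re ∧
      (riemannZeta (1 + ε)).re ≤ Real.exp (Real.eulerMascheroniConstant * ε) / ε := by
  have hζ : HasSum (fun n : ℕ ↦ 1 / ((n : ℝ) + 1) ^ (1 + ε)) (riemannZeta (1 + ε)).re := by
    exact_mod_cast hasSum_one_div_nat_add_one_rpow_riemannZeta (by linarith : 1 < 1 + ε)
  have hlt (n : ℕ) := one_div_rpow_sub_one_div_add_one_rpow_div_lt n.cast_add_one_pos hε
  constructor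
  · exact hasSum_lt (fun n ↦ (hlt n).le) (hlt 0)
      ((hasSum_one_div_nat_add_one_rpow_sub_succ hε).div_const ε) hζ
  · simpa using hasSum_le (one_div_rpow_one_add_le_mul_exp_neg_mul_harmonic_sub_succ hε) hζ
      ((hasSum_exp_neg_mul_harmonic_sub_succ hε).mul_left _)
end

section
/- Define α(t) = (1 − 2{t})/t − ({t} − {t}²)/t² for t > 0. Then ∫_1^∞ |α(x)|·1_{α(x)<0} dx/x = (1 − γ)/2, where γ is the Euler–Mascheroni constant. -/
/-!
Writing `n = ⌊x⌋`, one has `x² α(x) = n(n+1) - x²`, so on `[n, n+1)` the integrand is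
`max ((x² - n(n+1)) / x³) 0`, which vanishes up to `√(n(n+1))` and has antiderivative
`log x + n(n+1) / (2x²)` beyond it. Each unit interval thus contributes
`(log (n+1) - log n - 1/(n+1)) / 2`, so `∫₁ᴺ = (1 - (H_N - log N)) / 2 → (1 - γ) / 2`.
-/

open MeasureTheory Real Filter Set Topology

noncomputable def alpha (x : ℝ) : ℝ :=
  (1 - 2 * Int.fract x) / x - (Int.fract x - Int.fract x ^ 2) / x ^ 2

noncomputable def alphaNegIntegrand (x : ℝ) : ℝ :=
  if alpha x < 0 then |alpha x| / x else 0

lemma alpha_eq_floor {x : ℝ} (hx : x ≠ 0) :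
    alpha x = (⌊x⌋ * (⌊x⌋ + 1) - x ^ 2) / x ^ 2 := by
  rw [alpha, Int.fract]
  field_simp
  ring

lemma alphaNegIntegrand_eq_max {x : ℝ} (hx : 0 < x) :
    alphaNegIntegrand x = max ((x ^ 2 - ⌊x⌋ * (⌊x⌋ + 1)) / x ^ 3) 0 := by
  have hneg : -alpha x = (x ^ 2 - ⌊x⌋ * (⌊x⌋ + 1)) / x ^ 2 := by
    rw [alpha_eq_floor hx.ne']; ring
  have hdiv : (x ^ 2 - ⌊x⌋ * (⌊x⌋ + 1)) / x ^ 3 = -alpha x / x := by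
    rw [hneg, div_div, ← pow_succ]
  rw [alphaNegIntegrand, hdiv]
  split_ifs with h
  · rw [abs_of_neg h, max_eq_left (div_nonneg (by linarith) hx.le)]
  · rw [max_eq_right (div_nonpos_of_nonpos_of_nonneg (by linarith) hx.le)]

lemma alphaNegIntegrand_eq_of_mem_Ico {k : ℕ} (hk : 0 < k) {x : ℝ}
    (hx : x ∈ Ico (k : ℝ) (k + 1)) :
    alphaNegIntegrand x = max ((x ^ 2 - k * (k + 1)) / x ^ 3) 0 := by
  have hfloor : ⌊x⌋ = k := Int.floor_eq_iff.mpr (by exact_mod_cast hx)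
  rw [alphaNegIntegrand_eq_max (lt_of_lt_of_le (by exact_mod_cast hk) hx.1), hfloor]
  push_cast
  rfl

lemma measurable_alphaNegIntegrand : Measurable alphaNegIntegrand := by
  have hα : Measurable alpha := by unfold alpha; fun_prop
  exact Measurable.ite (measurableSet_lt hα measurable_const) (hα.abs.div measurable_id)
    measurable_const

lemma alphaNegIntegrand_nonneg {x : ℝ} (hx : 0 < x) : 0 ≤ alphaNegIntegrand x := by
  rw [alphaNegIntegrand_eq_max hx]
  exact le_max_right _ _

lemma alphaNegIntegrand_le {x : ℝ} (hx : 1 ≤ x) :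
    alphaNegIntegrand x ≤ 2 * x ^ (-2 : ℝ) := by
  have hx0 : 0 < x := by linarith
  have hfloor : (⌊x⌋ : ℝ) ≤ x := Int.floor_le x
  have hceil : x < ⌊x⌋ + 1 := Int.lt_floor_add_one x
  have hnum : x ^ 2 - ⌊x⌋ * (⌊x⌋ + 1) ≤ 2 * x := by nlinarith
  rw [alphaNegIntegrand_eq_max hx0, rpow_neg hx0.le, rpow_two]
  refine max_le ?_ (by positivity)
  calc (x ^ 2 - ⌊x⌋ * (⌊x⌋ + 1)) / x ^ 3 ≤ 2 * x / x ^ 3 := by gcongr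
    _ = 2 * (x ^ 2)⁻¹ := by field_simp

lemma integrableOn_alphaNegIntegrand : IntegrableOn alphaNegIntegrand (Ioi 1) := by
  have hdom : IntegrableOn (fun x : ℝ ↦ 2 * x ^ (-2 : ℝ)) (Ioi 1) :=
    (integrableOn_Ioi_rpow_of_lt (by norm_num) one_pos).const_mul 2
  refine hdom.mono' measurable_alphaNegIntegrand.aestronglyMeasurable.restrict ?_
  filter_upwards [ae_restrict_mem measurableSet_Ioi] with x hx
  rw [norm_of_nonneg (alphaNegIntegrand_nonneg (one_pos.trans hx))]
  exact alphaNegIntegrand_le hx.le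

lemma intervalIntegrable_alphaNegIntegrand {a b : ℝ} (ha : 1 ≤ a) (hab : a ≤ b) :
    IntervalIntegrable alphaNegIntegrand volume a b :=
  (intervalIntegrable_iff_integrableOn_Ioc_of_le hab).mpr
    (integrableOn_alphaNegIntegrand.mono_set (Ioc_subset_Ioi_self.trans (Ioi_subset_Ioi ha)))

lemma hasDerivAt_log_add_div_two_sq (c : ℝ) {x : ℝ} (hx : x ≠ 0) :
    HasDerivAt (fun y ↦ log y + c / (2 * y ^ 2)) ((x ^ 2 - c) / x ^ 3) x := by
  have hsq : HasDerivAt (fun y : ℝ ↦ 2 * y ^ 2) (2 * (2 * x)) x := by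
    simpa using (hasDerivAt_pow 2 x).const_mul 2
  have hdiv := (hasDerivAt_const x c).div hsq (by positivity)
  refine ((hasDerivAt_log hx).add hdiv).congr_deriv ?_
  field_simp
  ring

lemma integral_max_sub_sq_div_cube {a s b : ℝ} (ha : 0 < a) (has : a ≤ s) (hsb : s ≤ b) :
    ∫ x in a..b, max ((x ^ 2 - s ^ 2) / x ^ 3) 0 =
      log b - log s + s ^ 2 / (2 * b ^ 2) - 1 / 2 := by
  have hs : 0 < s := ha.trans_le has
  set g : ℝ → ℝ := fun x ↦ (x ^ 2 - s ^ 2) / x ^ 3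
  have hg : ContinuousOn g (Icc a b) :=
    ContinuousOn.div (by fun_prop) (by fun_prop) fun x hx ↦ (pow_pos (ha.trans_le hx.1) 3).ne'
  have hmax : ContinuousOn (fun x ↦ max (g x) 0) (Icc a b) := hg.sup continuousOn_const
  have hleft : ∫ x in a..s, max (g x) 0 = 0 := by
    refine (intervalIntegral.integral_congr fun x hx ↦ ?_).trans intervalIntegral.integral_zero
    rw [uIcc_of_le has] at hx
    have hx0 : 0 < x := ha.trans_le hx.1
    have : x ^ 2 ≤ s ^ 2 := pow_le_pow_left₀ hx0.le hx.2 2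
    exact max_eq_right (div_nonpos_of_nonpos_of_nonneg (by linarith) (by positivity))
  have hright : ∫ x in s..b, max (g x) 0 =
      log b + s ^ 2 / (2 * b ^ 2) - (log s + s ^ 2 / (2 * s ^ 2)) := by
    have hpos : ∀ x ∈ uIcc s b, 0 < x := fun x hx ↦ hs.trans_le (uIcc_of_le hsb ▸ hx).1
    rw [intervalIntegral.integral_congr fun x hx ↦ max_eq_left (div_nonneg
      (by nlinarith [hpos x hx, (uIcc_of_le hsb ▸ hx).1]) (pow_pos (hpos x hx) 3).le)]
    refine intervalIntegral.integral_eq_sub_of_hasDerivAt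
      (fun x hx ↦ hasDerivAt_log_add_div_two_sq _ (hpos x hx).ne') ?_
    exact (hg.mono (Icc_subset_Icc has le_rfl)).intervalIntegrable_of_Icc hsb
  rw [← intervalIntegral.integral_add_adjacent_intervals
    ((hmax.mono (Icc_subset_Icc le_rfl hsb)).intervalIntegrable_of_Icc has)
    ((hmax.mono (Icc_subset_Icc has le_rfl)).intervalIntegrable_of_Icc hsb), hleft, hright]
  field_simp
  ring

lemma integral_alphaNegIntegrand_unit_interval {k : ℕ} (hk : 0 < k) :
    ∫ x in (k : ℝ)..(k + 1), alphaNegIntegrand x = (log (k + 1) - log k - 1 / (k + 1)) / 2 := by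
  have hk0 : (0 : ℝ) < k := by exact_mod_cast hk
  set s := √(k * (k + 1) : ℝ)
  have hs2 : s ^ 2 = k * (k + 1) := sq_sqrt (by positivity)
  have hks : (k : ℝ) ≤ s := (le_sqrt hk0.le (by positivity)).mpr (by nlinarith)
  have hsk : s ≤ k + 1 := (sqrt_le_left (by positivity)).mpr (by nlinarith)
  have hcongr : ∫ x in (k : ℝ)..(k + 1), alphaNegIntegrand x
      = ∫ x in (k : ℝ)..(k + 1), max ((x ^ 2 - s ^ 2) / x ^ 3) 0 := by
    refine intervalIntegral.integral_congr_ae ?_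
    filter_upwards [Measure.ae_ne volume ((k : ℝ) + 1)] with x hne hx
    rw [uIoc_of_le (by linarith)] at hx
    rw [hs2, alphaNegIntegrand_eq_of_mem_Ico hk ⟨hx.1.le, lt_of_le_of_ne hx.2 hne⟩]
  rw [hcongr, integral_max_sub_sq_div_cube hk0 hks hsk, log_sqrt (by positivity),
    log_mul hk0.ne' (by positivity), hs2]
  field_simp
  ring

lemma integral_one_natCast_alphaNegIntegrand {N : ℕ} (hN : 1 ≤ N) :
    ∫ x in (1 : ℝ)..N, alphaNegIntegrand x = (1 - (harmonic N - log N)) / 2 := by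
  induction N, hN using Nat.le_induction with
  | base => simp
  | succ N hN ih =>
    have hN1 : (1 : ℝ) ≤ N := by exact_mod_cast hN
    push_cast
    rw [← intervalIntegral.integral_add_adjacent_intervals
      (intervalIntegrable_alphaNegIntegrand le_rfl hN1)
      (intervalIntegrable_alphaNegIntegrand hN1 (by linarith)), ih,
      integral_alphaNegIntegrand_unit_interval hN, harmonic_succ]
    push_cast
    ring

theorem integral_alpha_neg_part :
    (∫ x in Set.Ioi (1 : ℝ),
        (if ((1 - 2 * Int.fract x) / x - (Int.fract x - Int.fract x ^ 2) / x ^ 2) < 0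
         then |(1 - 2 * Int.fract x) / x - (Int.fract x - Int.fract x ^ 2) / x ^ 2| / x
         else 0))
      = (1 - Real.eulerMascheroniConstant) / 2 := by
  change ∫ x in Ioi 1, alphaNegIntegrand x = _
  have hlim := intervalIntegral_tendsto_integral_Ioi 1 integrableOn_alphaNegIntegrand
    tendsto_natCast_atTop_atTop
  have hpartial : Tendsto (fun N : ℕ ↦ (1 - (harmonic N - log N)) / 2) atTop
      (𝓝 ((1 - eulerMascheroniConstant) / 2)) :=
    (tendsto_harmonic_sub_log.const_sub 1).div_const 2
  refine tendsto_nhds_unique (hlim.congr' ?_) hpartial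
  filter_upwards [eventually_ge_atTop 1] with N hN using
    integral_one_natCast_alphaNegIntegrand hN
end
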